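/- arXiv:1806.04227 — 16 statements merged into one kernel-verified Lean document; each statement's English description precedes it below -/
import Mathlib

section
/- Let H be a complex Hilbert space and let A, B be bounded linear operators on H. Suppose D is a Moore–Penrose inverse of A + B. Then the following are equivalent: (i) the product A∘X∘B takes the same value for every {1}-inverse X of A + B (i.e., for all bounded operators X, Y on H with (A+B)∘X∘(A+B) = A+B and (A+B)∘Y∘(A+B) = A+B one has A∘X∘B = A∘Y∘B); (ii) A∘D∘(A+B) = A and (A+B)∘D∘B = B. -/
open ContinuousLinearMap

variable {H : Type*} [NormedAddCommGroup H] [InnerProductSpace ℂ H] [CompleteSpace H]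

/-- `X` is a Moore–Penrose inverse of `T`. -/
def IsMPInv (T X : H →L[ℂ] H) : Prop :=
  T ∘L X ∘L T = T ∧ X ∘L T ∘L X = X ∧
    adjoint (T ∘L X) = T ∘L X ∧ adjoint (X ∘L T) = X ∘L T

omit [CompleteSpace H] in
/-- If `M ∘ U ∘ N = 0` for every bounded operator `U`, then `M = 0` or `N = 0`. -/
private lemma aux_zero_or_zero (M N : H →L[ℂ] H)
    (h : ∀ U : H →L[ℂ] H, M * U * N = 0) : M = 0 ∨ N = 0 := by
  by_cases hN : N = 0
  · exact Or.inr hN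
  · left
    obtain ⟨z, hz⟩ : ∃ z, N z ≠ 0 := by
      by_contra hc
      push_neg at hc
      exact hN (ContinuousLinearMap.ext fun z => by simpa using hc z)
    ext y
    have h2 := congrFun (congrArg DFunLike.coe (h ((innerSL ℂ (N z)).smulRight y))) z
    simp [ContinuousLinearMap.mul_apply, smulRight_apply, innerSL_apply_apply, map_smul] at h2
    rcases h2 with h2 | h2
    · exact absurd h2 hz
    · simpa using h2

/-- Given a Moore–Penrose inverse `D` of `A + B`, the product `A ∘ X ∘ B` is the same for
every `{1}`-inverse `X` of `A + B` if and only if `A ∘ D ∘ (A+B) = A` and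
`(A+B) ∘ D ∘ B = B`. -/
theorem parallel_summable_iff (A B D : H →L[ℂ] H) (hD : IsMPInv (A + B) D) :
    (∀ X Y : H →L[ℂ] H,
        (A + B) ∘L X ∘L (A + B) = A + B → (A + B) ∘L Y ∘L (A + B) = A + B →
          A ∘L X ∘L B = A ∘L Y ∘L B) ↔
      (A ∘L D ∘L (A + B) = A ∧ (A + B) ∘L D ∘L B = B) := by
  obtain ⟨h1, -⟩ := hD
  have h1' : (A + B) * D * (A + B) = A + B := h1
  constructor
  · intro h
    -- `(A+B) * (1 - D*(A+B)) = 0` and `(1 - (A+B)*D) * (A+B) = 0`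
    have hz1 : (A + B) * (1 - D * (A + B)) = 0 := by
      rw [mul_sub, mul_one, ← mul_assoc, h1', sub_self]
    have hz2 : (1 - (A + B) * D) * (A + B) = 0 := by
      rw [sub_mul, one_mul, h1', sub_self]
    have key1 : ∀ U : H →L[ℂ] H, (A * (1 - D * (A + B))) * U * B = 0 := by
      intro U
      have hX : (A + B) * (D + (1 - D * (A + B)) * U) * (A + B) = A + B := by
        have expand : (A + B) * (D + (1 - D * (A + B)) * U) * (A + B)
            = (A + B) * D * (A + B)
              + ((A + B) * (1 - D * (A + B))) * (U * (A + B)) := by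
          noncomm_ring
        rw [expand, hz1, h1', zero_mul, add_zero]
      have hDX := h (D + (1 - D * (A + B)) * U) D hX h1
      have hDX' : A * (D + (1 - D * (A + B)) * U) * B = A * D * B := hDX
      calc (A * (1 - D * (A + B))) * U * B
          = A * (D + (1 - D * (A + B)) * U) * B - A * D * B := by noncomm_ring
        _ = 0 := by rw [hDX', sub_self]
    have key2 : ∀ V : H →L[ℂ] H, A * V * ((1 - (A + B) * D) * B) = 0 := by
      intro V
      have hY : (A + B) * (D + V * (1 - (A + B) * D)) * (A + B) = A + B := by
        have expand : (A + B) * (D + V * (1 - (A + B) * D)) * (A + B)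
            = (A + B) * D * (A + B)
              + ((A + B) * V) * ((1 - (A + B) * D) * (A + B)) := by
          noncomm_ring
        rw [expand, hz2, h1', mul_zero, add_zero]
      have hDY := h (D + V * (1 - (A + B) * D)) D hY h1
      have hDY' : A * (D + V * (1 - (A + B) * D)) * B = A * D * B := hDY
      calc A * V * ((1 - (A + B) * D) * B)
          = A * (D + V * (1 - (A + B) * D)) * B - A * D * B := by noncomm_ring
        _ = 0 := by rw [hDY', sub_self]
    constructor
    · rcases aux_zero_or_zero _ _ key1 with h0 | h0
      · rw [mul_sub, mul_one, sub_eq_zero] at h0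
        exact h0.symm
      · subst h0
        simp only [add_zero] at h1' ⊢
        exact h1'
    · rcases aux_zero_or_zero _ _ key2 with h0 | h0
      · subst h0
        simp only [zero_add] at h1' ⊢
        exact h1'
      · rw [sub_mul, one_mul, sub_eq_zero] at h0
        exact h0.symm
  · rintro ⟨hA, hB⟩ X Y hX hY
    have hA' : A * D * (A + B) = A := hA
    have hB' : (A + B) * D * B = B := hB
    have key : ∀ Z : H →L[ℂ] H, (A + B) * Z * (A + B) = A + B →
        A * Z * B = A * D * (A + B) * D * B := by
      intro Z hZ
      calc A * Z * B = (A * D * (A + B)) * Z * ((A + B) * D * B) := by rw [hA', hB']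
        _ = A * D * ((A + B) * Z * (A + B)) * D * B := by noncomm_ring
        _ = A * D * (A + B) * D * B := by rw [hZ]
    exact (key X hX).trans (key Y hY).symm
end

section
/- Let H be a complex Hilbert space, let A, B be bounded linear operators on H, and let D be a Moore–Penrose inverse of A + B. Then the following four conditions are equivalent: (i) A∘D∘(A+B) = A; (ii) B∘D∘(A+B) = B; (iii) range(A*) ⊆ range(A* + B*); (iv) range(B*) ⊆ range(A* + B*). -/
open ContinuousLinearMap

variable {H : Type*} [NormedAddCommGroup H] [InnerProductSpace ℂ H] [CompleteSpace H]

private lemma aux_range (T X A : H →L[ℂ] H) (h : T ∘L X ∘L T = T) :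
    A ∘L X ∘L T = A ↔ Set.range ⇑(adjoint A) ⊆ Set.range ⇑(adjoint T) := by
  constructor
  · intro hA
    have h2 : adjoint (A ∘L X ∘L T) = adjoint A := congrArg adjoint hA
    simp only [adjoint_comp] at h2
    rintro y ⟨z, rfl⟩
    exact ⟨adjoint X (adjoint A z), DFunLike.congr_fun h2 z⟩
  · intro hr
    have hinj : Function.Injective (adjoint : (H →L[ℂ] H) → (H →L[ℂ] H)) := by
      intro U V hUV
      have := congrArg adjoint hUV
      simpa [adjoint_adjoint] using this
    apply hinj
    ext z
    obtain ⟨w, hw⟩ := hr (Set.mem_range_self z)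
    have h2 : adjoint (T ∘L X ∘L T) = adjoint T := congrArg adjoint h
    simp only [adjoint_comp] at h2 ⊢
    calc adjoint T (adjoint X (adjoint A z))
        = adjoint T (adjoint X (adjoint T w)) := by rw [hw]
      _ = adjoint T w := DFunLike.congr_fun h2 w
      _ = adjoint A z := hw

/-- The four conditions characterizing one half of parallel summability are equivalent. -/
theorem tfae_left (A B D : H →L[ℂ] H) (hD : IsMPInv (A + B) D) :
    List.TFAE [A ∘L D ∘L (A + B) = A,
               B ∘L D ∘L (A + B) = B,
               Set.range ⇑(adjoint A) ⊆ Set.range ⇑(adjoint A + adjoint B),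
               Set.range ⇑(adjoint B) ⊆ Set.range ⇑(adjoint A + adjoint B)] := by
  obtain ⟨h1, -, -, -⟩ := hD
  have hadd : adjoint A + adjoint B = adjoint (A + B) := (map_add adjoint A B).symm
  have h13 : (A ∘L D ∘L (A + B) = A) ↔
      Set.range ⇑(adjoint A) ⊆ Set.range ⇑(adjoint A + adjoint B) := by
    rw [hadd]; exact aux_range (A + B) D A h1
  have h24 : (B ∘L D ∘L (A + B) = B) ↔
      Set.range ⇑(adjoint B) ⊆ Set.range ⇑(adjoint A + adjoint B) := by
    rw [hadd]; exact aux_range (A + B) D B h1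
  have h12 : (A ∘L D ∘L (A + B) = A) ↔ (B ∘L D ∘L (A + B) = B) := by
    constructor
    · intro hA
      have : A ∘L D ∘L (A + B) + B ∘L D ∘L (A + B) = A + B := by
        rw [← add_comp]; exact h1
      rw [hA] at this
      exact add_left_cancel this
    · intro hB
      have : A ∘L D ∘L (A + B) + B ∘L D ∘L (A + B) = A + B := by
        rw [← add_comp]; exact h1
      rw [hB] at this
      exact add_right_cancel this
  tfae_have 1 ↔ 2 := h12
  tfae_have 1 ↔ 3 := h13
  tfae_have 2 ↔ 4 := h24
  tfae_finish
end

section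
/- Let H be a complex Hilbert space, let A, B be bounded linear operators on H, and let D be a Moore–Penrose inverse of A + B. Then the following four conditions are equivalent: (i) (A+B)∘D∘B = B; (ii) (A+B)∘D∘A = A; (iii) range(B) ⊆ range(A + B); (iv) range(A) ⊆ range(A + B). -/
open ContinuousLinearMap

variable {H : Type*} [NormedAddCommGroup H] [InnerProductSpace ℂ H] [CompleteSpace H]

/-- The four conditions characterizing the other half of parallel summability are equivalent. -/
theorem tfae_right (A B D : H →L[ℂ] H) (hD : IsMPInv (A + B) D) :
    List.TFAE [(A + B) ∘L D ∘L B = B,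
               (A + B) ∘L D ∘L A = A,
               Set.range ⇑B ⊆ Set.range ⇑(A + B),
               Set.range ⇑A ⊆ Set.range ⇑(A + B)] := by
  obtain ⟨h1, -, -, -⟩ := hD
  have key : (A + B) ∘L D ∘L A + (A + B) ∘L D ∘L B = A + B := by
    rw [← comp_add, ← comp_add]; exact h1
  tfae_have 1 ↔ 2 := by
    constructor <;> intro h
    · have := key; rw [h] at this; exact add_right_cancel this
    · have := key; rw [h] at this; exact add_left_cancel this
  tfae_have 1 → 3 := by
    intro h
    rintro _ ⟨x, rfl⟩
    exact ⟨D (B x), congrFun (congrArg DFunLike.coe h) x⟩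
  tfae_have 3 → 1 := by
    intro h
    ext x
    obtain ⟨y, hy⟩ := h ⟨x, rfl⟩
    have := congrFun (congrArg DFunLike.coe h1) y
    simp only [comp_apply] at this ⊢
    rw [← hy, this]
  tfae_have 2 → 4 := by
    intro h
    rintro _ ⟨x, rfl⟩
    exact ⟨D (A x), congrFun (congrArg DFunLike.coe h) x⟩
  tfae_have 4 → 2 := by
    intro h
    ext x
    obtain ⟨y, hy⟩ := h ⟨x, rfl⟩
    have := congrFun (congrArg DFunLike.coe h1) y
    simp only [comp_apply] at this ⊢
    rw [← hy, this]
  tfae_finish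
end

section
/- Let H be a complex Hilbert space and let A, B be bounded linear operators on H with 0 ≤ A ≤ B (i.e., A and B are positive and B − A is positive). If B has a Moore–Penrose inverse, then range(A) ⊆ range(B). -/
/-!
A Moore–Penrose inverse `X` of `B` makes `range B = {y | B (X y) = y}` closed. If `B z = 0`, then
`0 ≤ ⟪A z, z⟫ ≤ ⟪B z, z⟫ = 0`, and writing `A = S* S` gives `S z = 0`, so `ker B ⊆ ker A`.
Taking orthogonal complements,
`range A ⊆ (ker A)ᗮ ⊆ (ker B)ᗮ = closure (range B) = range B`.
-/

open ContinuousLinearMap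

variable {H : Type*} [NormedAddCommGroup H] [InnerProductSpace ℂ H] [CompleteSpace H]

theorem ContinuousLinearMap.isClosed_range_of_comp_comp_eq {R E F : Type*} [Semiring R]
    [TopologicalSpace E] [AddCommMonoid E] [Module R E]
    [TopologicalSpace F] [T2Space F] [AddCommMonoid F] [Module R F]
    {T : E →L[R] F} {X : F →L[R] E} (h : T ∘L X ∘L T = T) : IsClosed (Set.range T) := by
  have hfix : Set.range T = {y | T (X y) = y} := by
    ext y
    constructor
    · rintro ⟨x, rfl⟩
      exact congr($h x)
    · intro hy
      exact ⟨X y, hy⟩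
  rw [hfix]
  exact isClosed_eq (by fun_prop) continuous_id

section

variable {E : Type*} [NormedAddCommGroup E] [InnerProductSpace ℂ E] [CompleteSpace E]

open scoped ComplexOrder

theorem ContinuousLinearMap.IsPositive.apply_eq_zero_of_inner_self_eq_zero {T : E →L[ℂ] E}
    (hT : T.IsPositive) {x : E} (hx : inner ℂ (T x) x = 0) : T x = 0 := by
  obtain ⟨S, rfl⟩ := CStarAlgebra.nonneg_iff_eq_star_mul_self.mp ((nonneg_iff_isPositive T).mpr hT)
  have hSx : S x = 0 := by
    rwa [star_eq_adjoint, mul_apply_eq_comp, adjoint_inner_left, inner_self_eq_zero] at hx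
  simp [hSx]

theorem ContinuousLinearMap.IsPositive.ker_le_ker_of_le {S T : E →L[ℂ] E} (hS : S.IsPositive)
    (hST : S ≤ T) : T.ker ≤ S.ker := by
  intro x hx
  rw [LinearMap.mem_ker, coe_coe] at hx ⊢
  refine hS.apply_eq_zero_of_inner_self_eq_zero (le_antisymm ?_ (hS.inner_nonneg_left x))
  simpa [inner_sub_left, hx] using hST.inner_nonneg_left x

end

theorem ContinuousLinearMap.range_subset_range_of_ker_le_ker {𝕜 E : Type*} [RCLike 𝕜]
    [NormedAddCommGroup E] [InnerProductSpace 𝕜 E] [CompleteSpace E] {S T : E →L[𝕜] E}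
    (hS : IsSelfAdjoint S) (hT : IsSelfAdjoint T) (hT_closed : IsClosed (Set.range T))
    (h : T.ker ≤ S.ker) : Set.range S ⊆ Set.range T := by
  have hclosure (U : E →L[𝕜] E) (hU : IsSelfAdjoint U) :
      U.kerᗮ = U.range.topologicalClosure := by
    rw [orthogonal_ker, hU.adjoint_eq]
  suffices S.range ≤ T.range from this
  calc S.range ≤ S.range.topologicalClosure := Submodule.le_topologicalClosure _
    _ = S.kerᗮ := (hclosure S hS).symm
    _ ≤ T.kerᗮ := Submodule.orthogonal_le h
    _ = T.range := by
      rw [hclosure T hT]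
      exact IsClosed.submodule_topologicalClosure_eq (by rwa [LinearMap.coe_range])

/-- If `0 ≤ A ≤ B` and `B` is M-P invertible, then `range A ⊆ range B`. -/
theorem range_subset_of_le (A B : H →L[ℂ] H) (hA : A.IsPositive) (hB : B.IsPositive)
    (hBA : (B - A).IsPositive) (hMP : ∃ X, IsMPInv B X) :
    Set.range ⇑A ⊆ Set.range ⇑B := by
  obtain ⟨X, hBXB, -⟩ := hMP
  exact range_subset_range_of_ker_le_ker hA.isSelfAdjoint hB.isSelfAdjoint
    (isClosed_range_of_comp_comp_eq hBXB) (hA.ker_le_ker_of_le hBA)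
end

section
/- Let H be a complex Hilbert space and let A, B be positive bounded linear operators on H. Suppose D is a Moore–Penrose inverse of A + B. Then A∘D∘(A+B) = A and (A+B)∘D∘B = B (so A and B are parallel summable), and moreover the parallel sum A∘D∘B is a positive operator. -/
open ContinuousLinearMap

variable {H : Type*} [NormedAddCommGroup H] [InnerProductSpace ℂ H] [CompleteSpace H]

/-!
For positive `A`, `B` the kernel of `A + B` lies in the kernels of `A` and `B`, so the identities
`(A + B) D (A + B) = A + B` and (its adjoint) `(A + B) (A + B) D = A + B` remain true after
replacing the left factor `A + B` by `A`, resp. `B`; the adjoint of `B (A + B) D = B` is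
`(A + B) D B = B`. With `P = D B` the last identity reads `A P = B (1 - P)`, whence
`A D B = P* A P + (1 - P)* B (1 - P)` is positive.
-/

open scoped ComplexOrder InnerProduct InnerProductSpace

namespace ContinuousLinearMap

theorem comp_eq_self_of_ker_le {R M N N' : Type*} [Ring R] [TopologicalSpace M] [AddCommGroup M]
    [Module R M] [TopologicalSpace N] [AddCommGroup N] [Module R N] [TopologicalSpace N']
    [AddCommGroup N'] [Module R N'] {S : M →L[R] N} {T : M →L[R] N'} {P : M →L[R] M}
    (hST : LinearMap.ker (S : M →ₗ[R] N) ≤ LinearMap.ker (T : M →ₗ[R] N'))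
    (h : S ∘L P = S) : T ∘L P = T := by
  ext x
  have hS : P x - x ∈ LinearMap.ker (S : M →ₗ[R] N) := by simpa [sub_eq_zero] using congr($h x)
  simpa [sub_eq_zero] using hST hS

section RCLike

variable {𝕜 E : Type*} [RCLike 𝕜] [NormedAddCommGroup E] [InnerProductSpace 𝕜 E] [CompleteSpace E]

theorem comp_comp_eq_self_of_isSelfAdjoint {T X : E →L[𝕜] E} (hT : IsSelfAdjoint T)
    (hTXT : T ∘L X ∘L T = T) (hTX : (T ∘L X)† = T ∘L X) : T ∘L T ∘L X = T := by
  simpa [← comp_assoc, adjoint_comp, hTX, hT.adjoint_eq] using congr(($hTXT)†)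

theorem isPositive_comp_comp_of_add_comp_comp_eq {A B D : E →L[𝕜] E} (hA : A.IsPositive)
    (hB : B.IsPositive) (h : (A + B) ∘L D ∘L B = B) : (A ∘L D ∘L B).IsPositive := by
  set P := D ∘L B
  have hAP : A * P = B * (1 - P) := by
    rw [mul_sub, mul_one, eq_sub_iff_add_eq, ← add_mul]
    exact h
  have hdecomp : A ∘L P = P† ∘L A ∘L P + (1 - P)† ∘L B ∘L (1 - P) := by
    change A * P = star P * (A * P) + star (1 - P) * (B * (1 - P))
    rw [← hAP, ← add_mul, star_sub, star_one]
    noncomm_ring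
  rw [hdecomp]
  exact (hA.adjoint_conj P).add (hB.adjoint_conj (1 - P))

end RCLike

theorem IsPositive.apply_eq_zero_of_inner_eq_zero {T : H →L[ℂ] H} (hT : T.IsPositive) {x : H}
    (hx : ⟪T x, x⟫_ℂ = 0) : T x = 0 := by
  have hT0 : 0 ≤ T := (nonneg_iff_isPositive T).mpr hT
  set R := CFC.sqrt T
  have hRR : R ∘L R = T := CFC.sqrt_mul_sqrt_self T hT0
  have hR : R† = R := (CFC.sqrt_nonneg T).isSelfAdjoint.adjoint_eq
  have hRx : R x = 0 := by
    rw [← hRR, comp_apply, ← adjoint_inner_right, hR] at hx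
    exact inner_self_eq_zero.mp hx
  rw [← hRR, comp_apply, hRx, map_zero]

theorem IsPositive.ker_add_le_ker_left {A B : H →L[ℂ] H} (hA : A.IsPositive)
    (hB : B.IsPositive) :
    LinearMap.ker ((A + B : H →L[ℂ] H) : H →ₗ[ℂ] H) ≤ LinearMap.ker (A : H →ₗ[ℂ] H) := by
  intro x hx
  have hsum : ⟪A x, x⟫_ℂ + ⟪B x, x⟫_ℂ = 0 := by
    rw [← inner_add_left, ← add_apply, show (A + B) x = 0 from hx, inner_zero_left]
  exact hA.apply_eq_zero_of_inner_eq_zero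
    ((add_eq_zero_iff_of_nonneg (hA.inner_nonneg_left x) (hB.inner_nonneg_left x)).mp hsum).1

end ContinuousLinearMap

/-- Positive operators whose sum is M-P invertible are parallel summable, with positive
parallel sum. -/
theorem positive_parallel_summable (A B D : H →L[ℂ] H) (hA : A.IsPositive)
    (hB : B.IsPositive) (hD : IsMPInv (A + B) D) :
    A ∘L D ∘L (A + B) = A ∧ (A + B) ∘L D ∘L B = B ∧ (A ∘L D ∘L B).IsPositive := by
  obtain ⟨hSDS, -, hSD, -⟩ := hD
  have hSSD : (A + B) ∘L (A + B) ∘L D = A + B :=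
    comp_comp_eq_self_of_isSelfAdjoint (hA.add hB).isSelfAdjoint hSDS hSD
  have hBSD : B ∘L (A + B) ∘L D = B :=
    comp_eq_self_of_ker_le (by simpa only [add_comm] using hB.ker_add_le_ker_left hA) hSSD
  have hSDB : (A + B) ∘L D ∘L B = B := by
    have := congr(($hBSD)†)
    rwa [adjoint_comp, hSD, hB.isSelfAdjoint.adjoint_eq, comp_assoc] at this
  exact ⟨comp_eq_self_of_ker_le (hA.ker_add_le_ker_left hB) hSDS, hSDB,
    isPositive_comp_comp_of_add_comp_comp_eq hA hB hSDB⟩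
end

section
/- Let H be a complex Hilbert space, let A, B be bounded linear operators on H, and let D be a Moore–Penrose inverse of A + B such that A∘D∘(A+B) = A and (A+B)∘D∘B = B. Then A∘D∘B = B∘D∘A, i.e., the parallel sum is commutative: A : B = B : A. -/
open ContinuousLinearMap

variable {H : Type*} [NormedAddCommGroup H] [InnerProductSpace ℂ H] [CompleteSpace H]

/-- The parallel sum is commutative: `A : B = B : A`. -/
theorem parallel_sum_comm (A B D : H →L[ℂ] H) (hD : IsMPInv (A + B) D)
    (h1 : A ∘L D ∘L (A + B) = A) (h2 : (A + B) ∘L D ∘L B = B) :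
    A ∘L D ∘L B = B ∘L D ∘L A := by
  have hS : (A + B) ∘L D ∘L (A + B) = A + B := hD.1
  simp only [← mul_def] at *
  have key : (A + B) * (D * A) = A := by
    have e : (A + B) * (D * A) + (A + B) * (D * B) = (A + B) * (D * (A + B)) := by
      noncomm_ring
    rw [h2, hS] at e
    exact add_right_cancel e
  have e1 : A * (D * A) + A * (D * B) = A := by
    calc A * (D * A) + A * (D * B) = A * (D * (A + B)) := by noncomm_ring
    _ = A := h1
  have e2 : A * (D * A) + B * (D * A) = A := by
    calc A * (D * A) + B * (D * A) = (A + B) * (D * A) := by noncomm_ring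
    _ = A := key
  have := e1.trans e2.symm
  exact add_left_cancel this
end

section
/- Let H be a complex Hilbert space, let A, B be bounded linear operators on H, and let D be a Moore–Penrose inverse of A + B such that A∘D∘(A+B) = A and (A+B)∘D∘B = B. Then range(A∘D∘B) = range(A) ∩ range(B), i.e., the range of the parallel sum A : B equals the intersection of the ranges of A and B. -/
open ContinuousLinearMap

variable {H : Type*} [NormedAddCommGroup H] [InnerProductSpace ℂ H] [CompleteSpace H]

/-- The range of the parallel sum is the intersection of the ranges. -/
theorem range_parallel_sum (A B D : H →L[ℂ] H) (hD : IsMPInv (A + B) D)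
    (h1 : A ∘L D ∘L (A + B) = A) (h2 : (A + B) ∘L D ∘L B = B) :
    Set.range ⇑(A ∘L D ∘L B) = Set.range ⇑A ∩ Set.range ⇑B := by
  ext y
  constructor
  · rintro ⟨x, rfl⟩
    refine ⟨⟨D (B x), rfl⟩, ⟨x - D (B x), ?_⟩⟩
    have h2x : A (D (B x)) + B (D (B x)) = B x := by
      have := ContinuousLinearMap.ext_iff.mp h2 x
      simpa using this
    rw [map_sub]
    exact (eq_sub_of_add_eq h2x).symm
  · rintro ⟨⟨u, hu⟩, ⟨v, hv⟩⟩
    have hBuv : B (u + v) = (A + B) u := by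
      rw [map_add, hv, ← hu, add_apply, add_comm]
    have h1u : A (D ((A + B) u)) = A u := by
      have := ContinuousLinearMap.ext_iff.mp h1 u
      simpa using this
    exact ⟨u + v, by
      calc (A ∘L D ∘L B) (u + v) = A (D (B (u + v))) := rfl
        _ = A (D ((A + B) u)) := by rw [hBuv]
        _ = A u := h1u
        _ = y := hu⟩
end

section
/- Let H be a complex Hilbert space and let A, B, C be bounded linear operators on H. Suppose: D₁ is a Moore–Penrose inverse of A + B with A∘D₁∘(A+B) = A and (A+B)∘D₁∘B = B, and set P = A∘D₁∘B; D₂ is a Moore–Penrose inverse of P + C with P∘D₂∘(P+C) = P and (P+C)∘D₂∘C = C; E₁ is a Moore–Penrose inverse of B + C with B∘E₁∘(B+C) = B and (B+C)∘E₁∘C = C, and set Q = B∘E₁∘C; E₂ is a Moore–Penrose inverse of A + Q with A∘E₂∘(A+Q) = A and (A+Q)∘E₂∘Q = Q. Then P∘D₂∘C = A∘E₂∘Q, i.e., the parallel sum is associative: (A : B) : C = A : (B : C) whenever both sides are well-defined. -/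
open ContinuousLinearMap

variable {H : Type*} [NormedAddCommGroup H] [InnerProductSpace ℂ H] [CompleteSpace H]

/-- The graph of the parallel sum `A ∘L D ∘L B` is the inverse of the sum of the inverse
relations of `A` and `B`. -/
theorem parallel_graph (A B D : H →L[ℂ] H)
    (h1 : A ∘L D ∘L (A + B) = A) (h2 : (A + B) ∘L D ∘L B = B) (s u : H) :
    (A ∘L D ∘L B) s = u ↔ ∃ x y, x + y = s ∧ A x = u ∧ B y = u := by
  constructor
  · intro h
    simp only [comp_apply] at h
    have h2' := DFunLike.congr_fun h2 s
    simp only [comp_apply, add_apply] at h2'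
    refine ⟨D (B s), s - D (B s), by abel, h, ?_⟩
    rw [map_sub]
    exact (eq_sub_of_add_eq h2').symm.trans h
  · rintro ⟨x, y, rfl, hx, hy⟩
    have h1' := DFunLike.congr_fun h1 x
    simp only [comp_apply, add_apply, map_add] at h1' ⊢
    rw [hy, ← hx]
    rw [add_comm, h1']

/-- The parallel sum is associative: `(A : B) : C = A : (B : C)` whenever both sides are
well-defined. -/
theorem parallel_sum_assoc (A B C D₁ D₂ E₁ E₂ : H →L[ℂ] H)
    (hD₁ : IsMPInv (A + B) D₁)
    (h1 : A ∘L D₁ ∘L (A + B) = A) (h2 : (A + B) ∘L D₁ ∘L B = B)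
    (hD₂ : IsMPInv ((A ∘L D₁ ∘L B) + C) D₂)
    (h3 : (A ∘L D₁ ∘L B) ∘L D₂ ∘L ((A ∘L D₁ ∘L B) + C) = A ∘L D₁ ∘L B)
    (h4 : ((A ∘L D₁ ∘L B) + C) ∘L D₂ ∘L C = C)
    (hE₁ : IsMPInv (B + C) E₁)
    (h5 : B ∘L E₁ ∘L (B + C) = B) (h6 : (B + C) ∘L E₁ ∘L C = C)
    (hE₂ : IsMPInv (A + (B ∘L E₁ ∘L C)) E₂)
    (h7 : A ∘L E₂ ∘L (A + (B ∘L E₁ ∘L C)) = A)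
    (h8 : (A + (B ∘L E₁ ∘L C)) ∘L E₂ ∘L (B ∘L E₁ ∘L C) = B ∘L E₁ ∘L C) :
    (A ∘L D₁ ∘L B) ∘L D₂ ∘L C = A ∘L E₂ ∘L (B ∘L E₁ ∘L C) := by
  ext z
  set u := ((A ∘L D₁ ∘L B) ∘L D₂ ∘L C) z with hu
  -- unfold LHS via the graph characterization twice
  obtain ⟨x, y, hxy, hPx, hCy⟩ := (parallel_graph _ C D₂ h3 h4 z u).mp hu.symm
  obtain ⟨a, b, hab, hAa, hBb⟩ := (parallel_graph A B D₁ h1 h2 x u).mp hPx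
  -- reassemble on the RHS
  have hQ : (B ∘L E₁ ∘L C) (b + y) = u :=
    (parallel_graph B C E₁ h5 h6 (b + y) u).mpr ⟨b, y, rfl, hBb, hCy⟩
  have : (A ∘L E₂ ∘L (B ∘L E₁ ∘L C)) z = u :=
    (parallel_graph A _ E₂ h7 h8 z u).mpr ⟨a, b + y, by rw [← hxy, ← hab]; abel, hAa, hQ⟩
  simp only [comp_apply] at this ⊢
  rw [this]
end

section
/- Let H be a complex Hilbert space, let A, B be bounded linear operators on H, and let D be a Moore–Penrose inverse of A + B such that A∘D∘(A+B) = A and (A+B)∘D∘B = B. Then the following are equivalent: (i) both A and B have Moore–Penrose inverses; (ii) the parallel sum A∘D∘B has a Moore–Penrose inverse. -/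
open ContinuousLinearMap

variable {H : Type*} [NormedAddCommGroup H] [InnerProductSpace ℂ H] [CompleteSpace H]

/-!
An operator on a Hilbert space is Moore–Penrose invertible iff it has an inner inverse `G`
(`T G T = T`), iff its range is closed. Given `G`, the Moore–Penrose inverse is `Q G P`, where `P`
and `Q` are the orthogonal projections onto `ran T` and `(ker T)ᗮ`; conversely, a closed range
makes the restriction of `T` to `(ker T)ᗮ` an isomorphism onto `ran T`, whose inverse composed
with `P` is an inner inverse.

For parallel summable `A` and `B` the parallel sum `A D B = B D A` has range `ran A ∩ ran B`,
which is closed when `A` and `B` are Moore–Penrose invertible. Conversely, an inner inverse `Z` of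
`A D B` yields the inner inverse `D + D B Z B D` of `A`, and symmetrically one of `B`.
-/

theorem isClosed_range_of_mul_mul_eq_self {R M : Type*} [Ring R] [TopologicalSpace M]
    [AddCommGroup M] [Module R M] [IsTopologicalAddGroup M] [T1Space M] {T G : M →L[R] M}
    (h : T * G * T = T) : IsClosed (Set.range T) := by
  have hTG : IsIdempotentElem (T * G) := by
    rw [IsIdempotentElem, ← mul_assoc, h]
  have hrange : Set.range (T * G) = Set.range T := by
    refine (Set.range_comp_subset_range G T).antisymm ?_
    rintro _ ⟨x, rfl⟩
    exact ⟨T x, DFunLike.congr_fun h x⟩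
  have := hTG.isClosed_range
  rwa [LinearMap.coe_range, ContinuousLinearMap.coe_coe, hrange] at this

theorem exists_mul_mul_eq_self_of_isClosed_range {𝕜 E : Type*} [RCLike 𝕜] [NormedAddCommGroup E]
    [InnerProductSpace 𝕜 E] [CompleteSpace E] {T : E →L[𝕜] E} (hT : IsClosed (Set.range T)) :
    ∃ G, T * G * T = T := by
  set K := T.kerᗮ
  have hmem (v : E) : v - T.ker.starProjection v ∈ K :=
    Submodule.sub_starProjection_mem_orthogonal v
  let f : K →L[𝕜] E := T ∘L K.subtypeL
  have hf_apply (v : E) : f ⟨_, hmem v⟩ = T v := by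
    have : T (T.ker.starProjection v) = 0 := T.ker.starProjection_apply_mem v
    change T (v - _) = T v
    rw [map_sub, this, sub_zero]
  have hinj : Function.Injective f := (injective_iff_map_eq_zero f).2 fun k hk =>
    Subtype.ext <| Submodule.disjoint_def.1 (Submodule.orthogonal_disjoint T.ker) k hk k.2
  have hrange : Set.range f = Set.range T :=
    subset_antisymm (Set.range_subset_iff.2 fun k => ⟨k, rfl⟩)
      (Set.range_subset_iff.2 fun v => ⟨_, hf_apply v⟩)
  have hf : IsClosed (Set.range f) := hrange ▸ hT
  have : CompleteSpace f.range := hf.completeSpace_coe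
  obtain ⟨L, hL⟩ := HasLeftInverse.of_injective_of_isClosed_range_of_closedComplement_range hinj hf
    ⟨f.range.orthogonalProjectionOnto, Submodule.orthogonalProjectionOnto_mem_subspace_eq_self⟩
  refine ⟨K.subtypeL ∘L L, ext fun v => ?_⟩
  change T (L (T v)) = T v
  rw [← hf_apply v, hL]
  rfl

theorem isMPInv_of_isStarProjection {T G P Q : H →L[ℂ] H} (hP : IsSelfAdjoint P)
    (hQ : IsStarProjection Q) (hPT : P * T = T) (hTGP : T * G * P = P) (hTQ : T * Q = T)
    (hQGT : Q * G * T = Q) : IsMPInv T (Q * G * P) := by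
  have hTX : T * (Q * G * P) = P := by rw [← mul_assoc, ← mul_assoc, hTQ, hTGP]
  have hXT : Q * G * P * T = Q := by rw [mul_assoc, hPT, hQGT]
  refine ⟨?_, ?_, ?_, ?_⟩
  · change T * (Q * G * P * T) = T
    rw [hXT, hTQ]
  · change Q * G * P * T * (Q * G * P) = Q * G * P
    rw [hXT, ← mul_assoc, ← mul_assoc, hQ.isIdempotentElem.eq]
  · change adjoint (T * (Q * G * P)) = T * (Q * G * P)
    rw [hTX, hP.adjoint_eq]
  · change adjoint (Q * G * P * T) = Q * G * P * T
    rw [hXT, hQ.isSelfAdjoint.adjoint_eq]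

theorem exists_isMPInv_of_mul_mul_eq_self {T G : H →L[ℂ] H} (h : T * G * T = T) :
    ∃ X, IsMPInv T X := by
  have hTGT : ∀ v, T (G (T v)) = T v := DFunLike.congr_fun h
  have : CompleteSpace T.range := (isClosed_range_of_mul_mul_eq_self h).completeSpace_coe
  refine ⟨_, isMPInv_of_isStarProjection (G := G) (P := T.range.starProjection)
    (Q := 1 - T.ker.starProjection) (isSelfAdjoint_starProjection _)
    isStarProjection_starProjection.one_sub ?_ ?_ ?_ ?_⟩
  · ext v
    exact Submodule.starProjection_eq_self_iff.2 (LinearMap.mem_range_self _ v)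
  · ext v
    obtain ⟨w, hw⟩ := T.range.starProjection_apply_mem v
    change T (G (T.range.starProjection v)) = T.range.starProjection v
    rw [← hw]
    exact hTGT w
  · ext v
    have : T (T.ker.starProjection v) = 0 := T.ker.starProjection_apply_mem v
    simp [this]
  · ext v
    have hker : G (T v) - v ∈ T.ker := by simp [hTGT]
    have hπ := Submodule.starProjection_eq_self_iff.2 hker
    rw [map_sub] at hπ
    change G (T v) - T.ker.starProjection (G (T v)) = v - T.ker.starProjection v
    rw [sub_eq_sub_iff_sub_eq_sub, hπ]

theorem exists_isMPInv_iff_exists_mul_mul_eq_self {T : H →L[ℂ] H} :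
    (∃ X, IsMPInv T X) ↔ ∃ G, T * G * T = T :=
  ⟨fun ⟨X, hX⟩ => ⟨X, (mul_assoc T X T).trans hX.1⟩,
    fun ⟨_, h⟩ => exists_isMPInv_of_mul_mul_eq_self h⟩

/-- The hypotheses of parallel summability, with an arbitrary inner inverse `D` of `A + B` in place
of `(A + B)†`; the parallel sum is then `A * D * B`. -/
structure IsParallelSummableWith {R : Type*} [Ring R] (A B D : R) : Prop where
  add_mul_mul_add : (A + B) * D * (A + B) = A + B
  mul_mul_add : A * D * (A + B) = A
  add_mul_mul : (A + B) * D * B = B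

namespace IsParallelSummableWith

variable {R : Type*} [Ring R] {A B D : R}

theorem symm (h : IsParallelSummableWith A B D) : IsParallelSummableWith B A D := by
  refine ⟨by rw [add_comm, h.add_mul_mul_add], ?_, ?_⟩
  · calc B * D * (B + A) = (A + B) * D * (A + B) - A * D * (A + B) := by noncomm_ring
      _ = B := by rw [h.add_mul_mul_add, h.mul_mul_add]; abel
  · calc (B + A) * D * A = (A + B) * D * (A + B) - (A + B) * D * B := by noncomm_ring
      _ = A := by rw [h.add_mul_mul_add, h.add_mul_mul]; abel

theorem mul_mul_comm (h : IsParallelSummableWith A B D) : A * D * B = B * D * A :=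
  calc A * D * B = (A + B) * D * B - B * D * B := by noncomm_ring
    _ = B * D * (B + A) - B * D * B := by rw [h.add_mul_mul, h.symm.mul_mul_add]
    _ = B * D * A := by noncomm_ring

theorem left_mul_mul_eq_self (h : IsParallelSummableWith A B D) {Z : R}
    (hZ : A * D * B * Z * (A * D * B) = A * D * B) :
    A * (D + D * B * Z * B * D) * A = A :=
  calc A * (D + D * B * Z * B * D) * A = A * D * A + A * D * B * Z * (B * D * A) := by
        noncomm_ring
    _ = A * D * (A + B) := by rw [← h.mul_mul_comm, hZ, mul_add]
    _ = A := h.mul_mul_add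

theorem right_mul_mul_eq_self (h : IsParallelSummableWith A B D) {Z : R}
    (hZ : A * D * B * Z * (A * D * B) = A * D * B) :
    B * (D + D * A * Z * A * D) * B = B :=
  h.symm.left_mul_mul_eq_self (by rwa [← h.mul_mul_comm])

end IsParallelSummableWith

theorem IsParallelSummableWith.range_mul_mul {R M : Type*} [Ring R] [TopologicalSpace M]
    [AddCommGroup M] [Module R M] [IsTopologicalAddGroup M] {A B D : M →L[R] M} (h : IsParallelSummableWith A B D) :
    Set.range (A * D * B) = Set.range A ∩ Set.range B := by
  have hcomm (v : M) : A (D (B v)) = B (D (A v)) := DFunLike.congr_fun h.mul_mul_comm v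
  refine subset_antisymm
    (Set.range_subset_iff.2 fun v => ⟨⟨D (B v), rfl⟩, D (A v), (hcomm v).symm⟩) ?_
  rintro x ⟨⟨u, rfl⟩, v, hv⟩
  refine ⟨u + v, ?_⟩
  calc (A * D * B) (u + v) = B (D (A u)) + A (D (B v)) := by rw [map_add, ← hcomm]; rfl
    _ = (B + A) (D (A u)) := by rw [hv, add_apply]
    _ = A u := DFunLike.congr_fun h.symm.add_mul_mul u

/-- The parallel sum is M-P invertible iff both summands are. -/
theorem parallel_sum_mp_invertible (A B D : H →L[ℂ] H) (hD : IsMPInv (A + B) D)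
    (h1 : A ∘L D ∘L (A + B) = A) (h2 : (A + B) ∘L D ∘L B = B) :
    ((∃ X, IsMPInv A X) ∧ (∃ Y, IsMPInv B Y)) ↔ (∃ Z, IsMPInv (A ∘L D ∘L B) Z) := by
  have h : IsParallelSummableWith A B D :=
    ⟨(mul_assoc _ _ _).trans hD.1, (mul_assoc _ _ _).trans h1, (mul_assoc _ _ _).trans h2⟩
  rw [show A ∘L D ∘L B = A * D * B from (mul_assoc A D B).symm]
  simp only [exists_isMPInv_iff_exists_mul_mul_eq_self]
  constructor
  · rintro ⟨⟨X, hX⟩, Y, hY⟩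
    apply exists_mul_mul_eq_self_of_isClosed_range
    rw [h.range_mul_mul]
    exact (isClosed_range_of_mul_mul_eq_self hX).inter (isClosed_range_of_mul_mul_eq_self hY)
  · rintro ⟨Z, hZ⟩
    exact ⟨⟨_, h.left_mul_mul_eq_self hZ⟩, _, h.right_mul_mul_eq_self hZ⟩
end

section
/- Let H be a complex Hilbert space and let M and N be closed subspaces of H such that M + N is closed in H. Then the orthogonal complement of M ∩ N equals M^⊥ + N^⊥ (in particular M^⊥ + N^⊥ is a closed subspace). -/
/-!
For `x ⊥ M ⊓ N`, the functional `m + n ↦ ⟪x, m⟫` on `M + N` is well defined, and it is bounded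
because, by the open mapping theorem, the addition map `M × N → M + N` between Banach spaces is
a quotient map. Its Riesz representative `y ∈ M + N` satisfies `y ⊥ N` and `x - y ⊥ M`, so
`x ∈ Mᗮ + Nᗮ`. The reverse inclusion is formal, and closedness follows since orthogonal
complements are closed.
-/

open Function

namespace ContinuousLinearMap

variable {𝕜 E F G : Type*} [NontriviallyNormedField 𝕜]
  [NormedAddCommGroup E] [NormedSpace 𝕜 E] [CompleteSpace E]
  [NormedAddCommGroup F] [NormedSpace 𝕜 F] [CompleteSpace F]
  [NormedAddCommGroup G] [NormedSpace 𝕜 G]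

theorem exists_comp_eq_of_ker_le (T : E →L[𝕜] F) (hT : Surjective T) (ψ : E →L[𝕜] G)
    (h : LinearMap.ker (T : E →ₗ[𝕜] F) ≤ LinearMap.ker (ψ : E →ₗ[𝕜] G)) :
    ∃ φ : F →L[𝕜] G, φ.comp T = ψ := by
  let e := LinearMap.quotKerEquivOfSurjective (T : E →ₗ[𝕜] F) hT
  let φ : F →ₗ[𝕜] G := ((LinearMap.ker (T : E →ₗ[𝕜] F)).liftQ ψ h).comp e.symm.toLinearMap
  have hφ : ⇑φ ∘ T = ψ := by
    funext x
    have hx : e (Submodule.Quotient.mk x) = T x := rfl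
    simp only [φ, Function.comp_apply, LinearMap.comp_apply, LinearEquiv.coe_coe, ← hx,
      LinearEquiv.symm_apply_apply]
    rfl
  have hφ_cont : Continuous φ := (T.isQuotientMap hT).continuous_iff.mpr (hφ ▸ ψ.continuous)
  exact ⟨⟨φ, hφ_cont⟩, DFunLike.coe_injective hφ⟩

end ContinuousLinearMap

namespace Submodule

variable {𝕜 E : Type*} [RCLike 𝕜] [NormedAddCommGroup E] [InnerProductSpace 𝕜 E] [CompleteSpace E]
  {M N : Submodule 𝕜 E}

theorem exists_dual_sup_apply_add_eq_inner (hM : IsClosed (M : Set E)) (hN : IsClosed (N : Set E))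
    (hMN : IsClosed ((M ⊔ N : Submodule 𝕜 E) : Set E)) {x : E} (hx : x ∈ (M ⊓ N)ᗮ) :
    ∃ φ : StrongDual 𝕜 (M ⊔ N : Submodule 𝕜 E),
      ∀ (m : M) (n : N), φ ⟨m + n, add_mem_sup m.2 n.2⟩ = inner 𝕜 x (m : E) := by
  have := hM.completeSpace_coe
  have := hN.completeSpace_coe
  have := hMN.completeSpace_coe
  let T : M × N →L[𝕜] (M ⊔ N : Submodule 𝕜 E) :=
    (M.subtypeL.coprod N.subtypeL).codRestrict _ fun p => add_mem_sup p.1.2 p.2.2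
  have hT : Surjective T := by
    rintro ⟨z, hz⟩
    obtain ⟨m, hm, n, hn, rfl⟩ := mem_sup.mp hz
    exact ⟨(⟨m, hm⟩, ⟨n, hn⟩), rfl⟩
  let ψ : M × N →L[𝕜] 𝕜 := (innerSL 𝕜 x).comp (M.subtypeL.comp (.fst 𝕜 M N))
  have hker : LinearMap.ker (T : M × N →ₗ[𝕜] (M ⊔ N : Submodule 𝕜 E)) ≤
      LinearMap.ker (ψ : M × N →ₗ[𝕜] 𝕜) := by
    rintro ⟨m, n⟩ hmn
    have hm : (m : E) = -n := eq_neg_of_add_eq_zero_left (congrArg Subtype.val hmn)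
    have hm_inf : (m : E) ∈ M ⊓ N := ⟨m.2, hm ▸ N.neg_mem n.2⟩
    exact inner_left_of_mem_orthogonal hm_inf hx
  obtain ⟨φ, hφ⟩ := T.exists_comp_eq_of_ker_le hT ψ hker
  exact ⟨φ, fun m n => congrArg (· (m, n)) hφ⟩

theorem orthogonal_inf_le_sup_orthogonal (hM : IsClosed (M : Set E)) (hN : IsClosed (N : Set E))
    (hMN : IsClosed ((M ⊔ N : Submodule 𝕜 E) : Set E)) : (M ⊓ N)ᗮ ≤ Mᗮ ⊔ Nᗮ := by
  intro x hx
  have := hMN.completeSpace_coe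
  obtain ⟨φ, hφ⟩ := exists_dual_sup_apply_add_eq_inner hM hN hMN hx
  let y : E := (InnerProductSpace.toDual 𝕜 (M ⊔ N : Submodule 𝕜 E)).symm φ
  have hy_inner : ∀ (m : M) (n : N), inner 𝕜 y (m + n : E) = inner 𝕜 x (m : E) := fun m n => by
    rw [← hφ, ← InnerProductSpace.toDual_symm_apply]
    rfl
  have hxy : x - y ∈ Mᗮ := (mem_orthogonal' M _).mpr fun m hm => by
    simpa [inner_sub_left, sub_eq_zero] using (hy_inner ⟨m, hm⟩ 0).symm
  have hy : y ∈ Nᗮ := (mem_orthogonal' N _).mpr fun n hn => by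
    simpa using hy_inner 0 ⟨n, hn⟩
  exact mem_sup.mpr ⟨x - y, hxy, y, hy, sub_add_cancel x y⟩

end Submodule

variable {H : Type*} [NormedAddCommGroup H] [InnerProductSpace ℂ H] [CompleteSpace H]

/-- If `M`, `N` are closed subspaces of a Hilbert space with `M + N` closed, then
`(M ∩ N)ᗮ = Mᗮ + Nᗮ`; in particular `Mᗮ + Nᗮ` is closed. -/
theorem orthogonal_inf_eq_sup_orthogonal (M N : Submodule ℂ H)
    (hM : IsClosed (M : Set H)) (hN : IsClosed (N : Set H))
    (hMN : IsClosed ((M ⊔ N : Submodule ℂ H) : Set H)) :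
    (M ⊓ N)ᗮ = Mᗮ ⊔ Nᗮ ∧ IsClosed ((Mᗮ ⊔ Nᗮ : Submodule ℂ H) : Set H) := by
  have heq : (M ⊓ N)ᗮ = Mᗮ ⊔ Nᗮ :=
    le_antisymm (Submodule.orthogonal_inf_le_sup_orthogonal hM hN hMN)
      (sup_le (Submodule.orthogonal_le inf_le_left) (Submodule.orthogonal_le inf_le_right))
  exact ⟨heq, heq ▸ Submodule.isClosed_orthogonal _⟩
end

section
/- Let H be a complex Hilbert space and let A, B be positive bounded linear operators on H with A ≠ 0 and B ≠ 0. Suppose D is a Moore–Penrose inverse of A + B. Then the parallel sum satisfies the norm bound ‖A∘D∘B‖ ≤ (‖A‖·‖B‖)/(‖A‖ + ‖B‖), where ‖·‖ is the operator norm. -/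
open ContinuousLinearMap

variable {H : Type*} [NormedAddCommGroup H] [InnerProductSpace ℂ H] [CompleteSpace H]

/-!
Put `T = A + B` and `S = A D B`. Positivity gives `ker T ⊆ ker A ∩ ker B`, so `A D T = A` and
`B D T = B`; hence `S = B D A`, `A D A = A - S` and `B D B = B - S`. Being the unique
Moore–Penrose inverse of a positive operator, `D` is self-adjoint and then `D = D* T D ≥ 0`. So
`S = (D A)* B (D A) + (D B)* A (D B) ≥ 0`, and with `M = a B - b A`,
`b² A + a² B = (a + b)² S + M* D M ≥ (a + b)² S`.
For `a = ‖A‖`, `b = ‖B‖` monotonicity of the norm on positive operators turns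
`0 ≤ (a + b)² S ≤ b² A + a² B` into `(a + b)² ‖S‖ ≤ b² a + a² b`.
-/

open scoped InnerProductSpace

lemma isMPInv_iff {T D : H →L[ℂ] H} : IsMPInv T D ↔
    T * D * T = T ∧ D * T * D = D ∧ IsSelfAdjoint (T * D) ∧ IsSelfAdjoint (D * T) :=
  Iff.rfl

lemma apply_eq_zero_of_re_inner_eq_zero {A : H →L[ℂ] H} (hA : 0 ≤ A) {x : H}
    (hx : RCLike.re ⟪A x, x⟫_ℂ = 0) : A x = 0 := by
  obtain ⟨s, rfl⟩ := CStarAlgebra.nonneg_iff_eq_star_mul_self.1 hA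
  rw [star_eq_adjoint, mul_apply_eq_comp, adjoint_inner_left, inner_self_eq_norm_sq] at hx
  simp [norm_eq_zero.1 (pow_eq_zero_iff two_ne_zero |>.1 hx)]

lemma apply_eq_zero_of_add_apply_eq_zero {A B : H →L[ℂ] H} (hA : 0 ≤ A) (hB : 0 ≤ B) {x : H}
    (hx : (A + B) x = 0) : A x = 0 := by
  have hAx := ((nonneg_iff_isPositive A).1 hA).re_inner_nonneg_left x
  have hBx := ((nonneg_iff_isPositive B).1 hB).re_inner_nonneg_left x
  have hsum : RCLike.re ⟪A x, x⟫_ℂ + RCLike.re ⟪B x, x⟫_ℂ = 0 := by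
    rw [← map_add, ← inner_add_left, ← add_apply, hx, inner_zero_left, map_zero]
  exact apply_eq_zero_of_re_inner_eq_zero hA (by linarith)

namespace IsMPInv

variable {T D : H →L[ℂ] H}

lemma adjoint (h : IsMPInv T D) : IsMPInv (adjoint T) (adjoint D) := by
  obtain ⟨hTDT, hDTD, hTD, hDT⟩ := isMPInv_iff.1 h
  simp only [isMPInv_iff, ← star_eq_adjoint, ← star_mul, ← mul_assoc, hTDT, hDTD, true_and]
  exact ⟨IsSelfAdjoint.star_iff.2 hDT, IsSelfAdjoint.star_iff.2 hTD⟩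

theorem unique {X : H →L[ℂ] H} (hD : IsMPInv T D) (hX : IsMPInv T X) : D = X := by
  obtain ⟨hTDT, hDTD, hTD, hDT⟩ := isMPInv_iff.1 hD
  obtain ⟨hTXT, hXTX, hTX, hXT⟩ := isMPInv_iff.1 hX
  have hD_eq : D = D * T * X := calc
    D = D * star (T * D) := by rw [hTD.star_eq, ← mul_assoc, hDTD]
    _ = D * star D * star (T * X * T) := by rw [hTXT, star_mul, mul_assoc]
    _ = D * star (T * D) * star (T * X) := by simp only [star_mul, mul_assoc]
    _ = D * T * X := by rw [hTD.star_eq, hTX.star_eq, ← mul_assoc, ← mul_assoc, hDTD]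
  have hX_eq : X = D * T * X := calc
    X = star (X * T) * X := by rw [hXT.star_eq, hXTX]
    _ = star (T * D * T) * star X * X := by rw [hTDT, star_mul]
    _ = star (D * T) * star (X * T) * X := by simp only [star_mul, mul_assoc]
    _ = D * T * (X * T * X) := by rw [hDT.star_eq, hXT.star_eq]; noncomm_ring
    _ = D * T * X := by rw [hXTX]
  rw [hD_eq, ← hX_eq]

lemma isSelfAdjoint (h : IsMPInv T D) (hT : IsSelfAdjoint T) : IsSelfAdjoint D := by
  have hD := h.adjoint
  rw [← star_eq_adjoint, ← star_eq_adjoint, hT.star_eq] at hD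
  exact (h.unique hD).symm

lemma nonneg (h : IsMPInv T D) (hT : 0 ≤ T) : 0 ≤ D := by
  have hD : IsSelfAdjoint D := h.isSelfAdjoint (.of_nonneg hT)
  rw [← (isMPInv_iff.1 h).2.1]
  simpa [hD.star_eq] using star_left_conjugate_nonneg hT D

lemma mul_mul_eq_of_apply_eq_zero {A : H →L[ℂ] H} (h : IsMPInv T D)
    (hA : ∀ x, T x = 0 → A x = 0) : A * D * T = A := by
  ext x
  have hx : T (D (T x) - x) = 0 := by
    rw [map_sub, sub_eq_zero]; exact DFunLike.congr_fun h.1 x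
  simpa [sub_eq_zero] using hA _ hx

section ParallelSum

variable {A B : H →L[ℂ] H} (hD : IsMPInv (A + B) D) (hA : 0 ≤ A) (hB : 0 ≤ B)
include hD hA hB

lemma mul_mul_add_eq_left : A * D * (A + B) = A :=
  hD.mul_mul_eq_of_apply_eq_zero fun _ ↦ apply_eq_zero_of_add_apply_eq_zero hA hB

lemma mul_mul_add_eq_right : B * D * (A + B) = B := by
  rw [add_comm] at hD ⊢
  exact hD.mul_mul_add_eq_left hB hA

lemma add_mul_mul_eq_left : (A + B) * D * A = A := by
  have hT : IsSelfAdjoint (A + B) := .of_nonneg (add_nonneg hA hB)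
  simpa only [star_mul, ← mul_assoc, (IsSelfAdjoint.of_nonneg hA).star_eq, hT.star_eq,
    (hD.isSelfAdjoint hT).star_eq] using congrArg star (hD.mul_mul_add_eq_left hA hB)

lemma parallelSum_comm : B * D * A = A * D * B := calc
  B * D * A = (A + B) * D * A - A * D * A := by noncomm_ring
  _ = A * D * (A + B) - A * D * A := by
    rw [hD.add_mul_mul_eq_left hA hB, hD.mul_mul_add_eq_left hA hB]
  _ = A * D * B := by noncomm_ring

lemma parallelSum_nonneg : 0 ≤ A * D * B := by
  have hDsa := hD.isSelfAdjoint (.of_nonneg (add_nonneg hA hB))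
  have h : A * D * B = star (D * A) * B * (D * A) + star (D * B) * A * (D * B) := calc
    A * D * B = A * D * (B * D * (A + B)) := by rw [hD.mul_mul_add_eq_right hA hB]
    _ = A * D * B * D * A + B * D * A * D * B := by
      rw [hD.parallelSum_comm hA hB]; noncomm_ring
    _ = star (D * A) * B * (D * A) + star (D * B) * A * (D * B) := by
      simp only [star_mul, hDsa.star_eq, (IsSelfAdjoint.of_nonneg hA).star_eq,
        (IsSelfAdjoint.of_nonneg hB).star_eq]
      noncomm_ring
  rw [h]
  exact add_nonneg (star_left_conjugate_nonneg hB _) (star_left_conjugate_nonneg hA _)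

lemma smul_parallelSum_le (a b : ℝ) : (a + b) ^ 2 • (A * D * B) ≤ b ^ 2 • A + a ^ 2 • B := by
  set M := a • B - b • A
  have hM : IsSelfAdjoint M :=
    ((IsSelfAdjoint.all a).smul (.of_nonneg hB)).sub ((IsSelfAdjoint.all b).smul (.of_nonneg hA))
  have hAA : A * D * A = A - A * D * B := by
    rw [eq_sub_iff_add_eq, ← mul_add, hD.mul_mul_add_eq_left hA hB]
  have hBB : B * D * B = B - A * D * B := by
    rw [← hD.parallelSum_comm hA hB, eq_sub_iff_add_eq, add_comm, ← mul_add,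
      hD.mul_mul_add_eq_right hA hB]
  have h : b ^ 2 • A + a ^ 2 • B = (a + b) ^ 2 • (A * D * B) + star M * D * M := by
    rw [hM.star_eq]
    simp only [M, sub_mul, mul_sub, smul_mul_assoc, mul_smul_comm, hD.parallelSum_comm hA hB,
      hAA, hBB]
    module
  rw [h]
  exact le_add_of_nonneg_right (star_left_conjugate_nonneg (hD.nonneg (add_nonneg hA hB)) M)

end ParallelSum

end IsMPInv

theorem norm_parallel_sum_le_general (A B D : H →L[ℂ] H) (hA : A.IsPositive) (hB : B.IsPositive)
    (hD : IsMPInv (A + B) D) :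
    ‖A ∘L D ∘L B‖ ≤ ‖A‖ * ‖B‖ / (‖A‖ + ‖B‖) := by
  rcases eq_or_ne A 0 with rfl | hA0
  · simp
  rw [← nonneg_iff_isPositive] at hA hB
  change ‖A * (D * B)‖ ≤ _
  rw [← mul_assoc]
  set a := ‖A‖
  set b := ‖B‖
  have hab : 0 < a + b := add_pos_of_pos_of_nonneg (norm_pos_iff.2 hA0) (norm_nonneg B)
  have key : (a + b) * ((a + b) * ‖A * D * B‖) ≤ (a + b) * (a * b) := calc
    (a + b) * ((a + b) * ‖A * D * B‖) = ‖(a + b) ^ 2 • (A * D * B)‖ := by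
      rw [norm_smul, Real.norm_of_nonneg (by positivity)]; ring
    _ ≤ ‖b ^ 2 • A + a ^ 2 • B‖ := CStarAlgebra.norm_le_norm_of_nonneg_of_le
      (smul_nonneg (by positivity) (hD.parallelSum_nonneg hA hB)) (hD.smul_parallelSum_le hA hB a b)
    _ ≤ b ^ 2 * a + a ^ 2 * b := norm_add_le_of_le
      (by rw [norm_smul, Real.norm_of_nonneg (by positivity)])
      (by rw [norm_smul, Real.norm_of_nonneg (by positivity)])
    _ = (a + b) * (a * b) := by ring
  rw [le_div_iff₀ hab, mul_comm]
  exact le_of_mul_le_mul_left key hab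

/-- Norm bound for the parallel sum of positive operators:
`‖A : B‖ ≤ ‖A‖ ‖B‖ / (‖A‖ + ‖B‖)`. -/
theorem norm_parallel_sum_le (A B D : H →L[ℂ] H) (hA : A.IsPositive) (hB : B.IsPositive)
    (hA0 : A ≠ 0) (hB0 : B ≠ 0) (hD : IsMPInv (A + B) D) :
    ‖A ∘L D ∘L B‖ ≤ ‖A‖ * ‖B‖ / (‖A‖ + ‖B‖) :=
  norm_parallel_sum_le_general A B D hA hB hD
end

section
/- Let K be a complex Hilbert space and let A, B be bounded linear operators on K such that |A + B| = |A| + |B|, where |T| denotes the positive square root of T*∘T. Then A + B has a Moore–Penrose inverse if and only if |A| + |B| has a Moore–Penrose inverse. -/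
/-!
Write `a = A + B` and `b = |A| + |B|`; the hypothesis says `b = |a|`, so `b` is self-adjoint
and `b⋆ b = a⋆ a`. In a C⋆-ring, `b⋆ b = a⋆ a` forces `a` and `b` to have the same right
annihilator, since `(b c)⋆ (b c) = c⋆ (a⋆ a) c = (a c)⋆ (a c)`. Hence a Moore–Penrose inverse
`x` of `a` yields the Moore–Penrose inverse `x x⋆ b⋆` of `b`: its product with `b` on the right
is `x x⋆ a⋆ a = x a`, and `b x a = b` because `a (1 - x a) = 0`. The situation is symmetric in
`a` and `b`.
-/

open ContinuousLinearMap

variable {H : Type*} [NormedAddCommGroup H] [InnerProductSpace ℂ H] [CompleteSpace H]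

structure IsMoorePenroseInverse {R : Type*} [Mul R] [Star R] (a x : R) : Prop where
  mul_inv_mul : a * x * a = a
  inv_mul_inv : x * a * x = x
  isSelfAdjoint_mul_inv : IsSelfAdjoint (a * x)
  isSelfAdjoint_inv_mul : IsSelfAdjoint (x * a)

theorem isMPInv_iff_isMoorePenroseInverse (T X : H →L[ℂ] H) :
    IsMPInv T X ↔ IsMoorePenroseInverse T X :=
  ⟨fun ⟨h₁, h₂, h₃, h₄⟩ => ⟨h₁, h₂, h₃, h₄⟩,
    fun ⟨h₁, h₂, h₃, h₄⟩ => ⟨h₁, h₂, h₃, h₄⟩⟩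

theorem CStarRing.mul_eq_zero_of_star_mul_self_eq {R : Type*} [NonUnitalNormedRing R]
    [StarRing R] [CStarRing R] {a b : R} (hab : star a * a = star b * b) {c : R}
    (hc : a * c = 0) : b * c = 0 := by
  rw [← CStarRing.star_mul_self_eq_zero_iff]
  calc star (b * c) * (b * c) = star c * (star b * b) * c := by
        simp only [star_mul, mul_assoc]
    _ = star (a * c) * (a * c) := by simp only [← hab, star_mul, mul_assoc]
    _ = 0 := by rw [hc, mul_zero]

section CStarRing

variable {R : Type*} [NormedRing R] [StarRing R] [CStarRing R] {a b : R}

theorem IsMoorePenroseInverse.mul_inv_mul_of_star_mul_self_eq {x : R}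
    (hx : IsMoorePenroseInverse a x) (hab : star a * a = star b * b) : b * (x * a) = b := by
  have hker : a * (1 - x * a) = 0 := by
    rw [mul_sub, mul_one, ← mul_assoc, hx.mul_inv_mul, sub_self]
  have := CStarRing.mul_eq_zero_of_star_mul_self_eq hab hker
  rwa [mul_sub, mul_one, sub_eq_zero, eq_comm] at this

theorem IsMoorePenroseInverse.of_star_mul_self_eq {x : R} (hx : IsMoorePenroseInverse a x)
    (hab : star a * a = star b * b) : IsMoorePenroseInverse b (x * star x * star b) := by
  have hyb : x * star x * star b * b = x * a :=
    calc x * star x * star b * b = x * star x * (star a * a) := by rw [hab, mul_assoc _ (star b)]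
      _ = x * star (a * x) * a := by simp only [star_mul, mul_assoc]
      _ = x * a := by rw [hx.isSelfAdjoint_mul_inv.star_eq, ← mul_assoc, hx.inv_mul_inv]
  refine ⟨?_, ?_, ?_, ?_⟩
  · rw [mul_assoc, hyb, hx.mul_inv_mul_of_star_mul_self_eq hab]
  · rw [hyb, ← mul_assoc, ← mul_assoc, hx.inv_mul_inv]
  · simpa only [star_mul, mul_assoc] using IsSelfAdjoint.mul_star_self (b * x)
  · rw [hyb]
    exact hx.isSelfAdjoint_inv_mul

theorem exists_isMoorePenroseInverse_iff_of_star_mul_self_eq (hab : star a * a = star b * b) :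
    (∃ x, IsMoorePenroseInverse a x) ↔ ∃ y, IsMoorePenroseInverse b y :=
  ⟨fun ⟨_, hx⟩ => ⟨_, hx.of_star_mul_self_eq hab⟩,
    fun ⟨_, hy⟩ => ⟨_, hy.of_star_mul_self_eq hab.symm⟩⟩

end CStarRing

theorem mp_invertible_iff_abs_general (A B sA sB sAB : H →L[ℂ] H)
    (hsAB : sAB.IsPositive) (hsAB2 : sAB ∘L sAB = adjoint (A + B) ∘L (A + B))
    (habs : sAB = sA + sB) :
    (∃ X, IsMPInv (A + B) X) ↔ (∃ Y, IsMPInv (sA + sB) Y) := by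
  subst habs
  have hsq : star (A + B) * (A + B) = star (sA + sB) * (sA + sB) := by
    rw [hsAB.isSelfAdjoint.star_eq, mul_def, mul_def, star_eq_adjoint, hsAB2]
  simp only [isMPInv_iff_isMoorePenroseInverse]
  exact exists_isMoorePenroseInverse_iff_of_star_mul_self_eq hsq

/-- If `|A + B| = |A| + |B|`, then `A + B` is M-P invertible iff `|A| + |B|` is. -/
theorem mp_invertible_iff_abs (A B sA sB sAB : H →L[ℂ] H)
    (hsA : sA.IsPositive) (hsA2 : sA ∘L sA = adjoint A ∘L A)
    (hsB : sB.IsPositive) (hsB2 : sB ∘L sB = adjoint B ∘L B)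
    (hsAB : sAB.IsPositive) (hsAB2 : sAB ∘L sAB = adjoint (A + B) ∘L (A + B))
    (habs : sAB = sA + sB) :
    (∃ X, IsMPInv (A + B) X) ↔ (∃ Y, IsMPInv (sA + sB) Y) :=
  mp_invertible_iff_abs_general A B sA sB sAB hsAB hsAB2 habs
end

section
/- Let K be a complex Hilbert space and let A, B be nonzero bounded linear operators on K such that |A + B| = |A| + |B|, where |T| denotes the positive square root of T*∘T. Suppose D is a Moore–Penrose inverse of A + B. Then A and B are parallel summable, i.e., A∘D∘(A+B) = A and (A+B)∘D∘B = B, and the norm bound ‖A∘D∘B‖ ≤ (‖A‖·‖B‖)/(‖A‖ + ‖B‖) holds, where ‖·‖ is the operator norm. -/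
open ContinuousLinearMap

variable {H : Type*} [NormedAddCommGroup H] [InnerProductSpace ℂ H] [CompleteSpace H]

/-!
Write `T = A + B`, so that `|T| = |A| + |B|`, and let `U = |T| D`, the adjoint of the partial
isometry of the polar decomposition of `T`. Expanding `T* T = (|A| + |B|)²` shows that
`Y = U A - |A|` satisfies `Y* |T| + |T| Y = 0`, and since `U` is a contraction,
`Y* Y ≤ Y* |B| + |B| Y`. Along the flow `t ↦ exp (t Y) x` the `|T|`-form is therefore conserved,
while the `|B|`-form, which it dominates, grows at least linearly with slope proportional to
`⟪|T| Y x, Y x⟫`. Hence `|T| Y = 0`, which forces `Y = 0`: `U A = |A|` and `U B = |B|`.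
Consequently `ran A ⊆ ran T`, and `A D B = U* (|A| g |B|)` with `g = D U* = |T|†`; the middle
factor is the parallel sum of `|A|` and `|B|`, whose norm is at most `‖A‖ ‖B‖ / (‖A‖ + ‖B‖)`.
-/

open NormedSpace RCLike
open scoped InnerProductSpace

section CStarRing

variable {𝒜 : Type*} [NonUnitalNormedRing 𝒜] [StarRing 𝒜] [CStarRing 𝒜]

theorem norm_eq_of_star_mul_self_eq {x y : 𝒜} (h : star x * x = star y * y) : ‖x‖ = ‖y‖ := by
  rw [← sq_eq_sq₀ (norm_nonneg _) (norm_nonneg _), sq, sq, ← CStarRing.norm_star_mul_self, h,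
    CStarRing.norm_star_mul_self]

theorem mul_eq_zero_of_star_mul_self_eq {x y c : 𝒜} (h : star x * x = star y * y)
    (hy : y * c = 0) : x * c = 0 := by
  have : star (x * c) * (x * c) = star (y * c) * (y * c) := by
    simp only [star_mul, mul_assoc]; rw [← mul_assoc (star x), h, mul_assoc]
  rwa [← CStarRing.star_mul_self_eq_zero_iff, this, CStarRing.star_mul_self_eq_zero_iff]

theorem IsStarProjection.mul_eq_self_of_star_mul_mul_eq {p x : 𝒜} (hp : IsStarProjection p)
    (h : star x * p * x = star x * x) : p * x = x := by
  have : star (x - p * x) * (x - p * x) = star x * x - star x * p * x := by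
    simp only [star_sub, star_mul, hp.isSelfAdjoint.star_eq, sub_mul, mul_sub]
    rw [← mul_assoc (star x * p) p x, mul_assoc (star x) p p, hp.isIdempotentElem.eq]
    noncomm_ring
  rw [h, sub_self, CStarRing.star_mul_self_eq_zero_iff, sub_eq_zero] at this
  exact this.symm

theorem norm_le_one_of_isStarProjection_star_mul_self {u : 𝒜}
    (hu : IsStarProjection (star u * u)) : ‖u‖ ≤ 1 := by
  have := hu.norm_le
  rw [CStarRing.norm_star_mul_self] at this
  nlinarith [norm_nonneg u]

end CStarRing

theorem mul_eq_self_of_star_mul_self_eq {𝒜 : Type*} [NormedRing 𝒜] [StarRing 𝒜] [CStarRing 𝒜]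
    {x y e : 𝒜} (h : star x * x = star y * y) (hy : y * e = y) : x * e = x := by
  rw [← sub_eq_zero, ← mul_sub_one]
  exact mul_eq_zero_of_star_mul_self_eq h (by rw [mul_sub_one, hy, sub_self])

section CStarAlgebra

variable {𝒜 : Type*} [CStarAlgebra 𝒜] [PartialOrder 𝒜] [StarOrderedRing 𝒜]

theorem mul_eq_zero_of_star_mul_mul_eq_zero {a c : 𝒜} (ha : 0 ≤ a) (h : star c * a * c = 0) :
    a * c = 0 := by
  have hsc : CFC.sqrt a * c = 0 := by
    rw [← CStarRing.star_mul_self_eq_zero_iff, star_mul, (CFC.sqrt_nonneg a).star_eq,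
      mul_assoc, ← mul_assoc (CFC.sqrt a), CFC.sqrt_mul_sqrt_self a, ← mul_assoc, h]
  rw [← CFC.sqrt_mul_sqrt_self a, mul_assoc, hsc, mul_zero]

theorem mul_eq_self_of_le {a s e : 𝒜} (ha : 0 ≤ a) (has : a ≤ s) (hs : s * e = s) :
    a * e = a := by
  rw [← sub_eq_zero, ← mul_sub_one]
  refine mul_eq_zero_of_star_mul_mul_eq_zero ha (le_antisymm ?_ (star_left_conjugate_nonneg ha _))
  simpa [mul_assoc, mul_sub_one, hs] using star_left_conjugate_le_conjugate has (e - 1)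

variable {a b g : 𝒜}

theorem mul_mul_nonneg_of_mul_mul_add_eq (ha : 0 ≤ a) (hb : 0 ≤ b) (hg : IsSelfAdjoint g)
    (hag : a * g * (a + b) = a) : 0 ≤ a * g * b := calc
  0 ≤ star (1 - g * a) * a * (1 - g * a) + star (g * a) * b * (g * a) :=
    add_nonneg (star_left_conjugate_nonneg ha _) (star_left_conjugate_nonneg hb _)
  _ = a - 2 • (a * g * a) + a * g * (a + b) * g * a := by
    simp only [star_sub, star_one, star_mul, ha.isSelfAdjoint.star_eq, hg.star_eq]; noncomm_ring
  _ = a * g * b := by rw [hag]; nth_rewrite 1 [← hag]; noncomm_ring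

theorem mul_mul_le_of_mul_mul_add_eq (ha : IsSelfAdjoint a) (hb : IsSelfAdjoint b) (hg : 0 ≤ g)
    (hag : a * g * (a + b) = a) (hbg : b * g * (a + b) = b) {α β : ℝ} (hαβ : α + β = 1) :
    a * g * b ≤ β ^ 2 • a + α ^ 2 • b := by
  set N := a * g * b
  have hga : (a + b) * g * a = a := by
    simpa only [star_mul, star_add, ha.star_eq, hb.star_eq, hg.isSelfAdjoint.star_eq, mul_assoc]
      using congr_arg star hag
  have haga : a * g * a = a - N := by rw [eq_sub_iff_add_eq, ← mul_add]; exact hag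
  have hbga : b * g * a = N := calc
    b * g * a = (a + b) * g * a - a * g * a := by noncomm_ring
    _ = N := by rw [hga, haga, sub_sub_cancel]
  have hbgb : b * g * b = b - N := calc
    b * g * b = b * g * (a + b) - b * g * a := by noncomm_ring
    _ = b - N := by rw [hbg, hbga]
  -- `a * g * b` is the parallel sum of `a` and `b`; this is its variational characterization
  -- tested on the splitting `x = β • x + α • x`.
  have hsplit : (α + β) ^ 2 • N + (β • a - α • b) * g * (β • a - α • b) =
      β ^ 2 • a + α ^ 2 • b := by
    simp only [sub_mul, mul_sub, smul_mul_assoc, mul_smul_comm, smul_sub, smul_smul, haga, hbga,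
      hbgb]
    module
  rw [← hsplit, hαβ, one_pow, one_smul]
  exact le_add_of_nonneg_right <| IsSelfAdjoint.conjugate_nonneg hg
    (((IsSelfAdjoint.all β).smul ha).sub ((IsSelfAdjoint.all α).smul hb))

theorem norm_mul_mul_le_of_mul_mul_add_eq (ha : 0 ≤ a) (hb : 0 ≤ b) (hg : 0 ≤ g)
    (hag : a * g * (a + b) = a) (hbg : b * g * (a + b) = b) :
    ‖a * g * b‖ ≤ ‖a‖ * ‖b‖ / (‖a‖ + ‖b‖) := by
  rcases (add_nonneg (norm_nonneg a) (norm_nonneg b)).eq_or_lt with hab | hab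
  · have : a = 0 := norm_eq_zero.mp (by linarith [norm_nonneg a, norm_nonneg b])
    simp [this]
  set α := ‖a‖ / (‖a‖ + ‖b‖)
  set β := ‖b‖ / (‖a‖ + ‖b‖)
  have hαβ : α + β = 1 := by rw [← add_div, div_self hab.ne']
  rw [CStarAlgebra.norm_le_iff_le_algebraMap _ (by positivity)
    (mul_mul_nonneg_of_mul_mul_add_eq ha hb hg.isSelfAdjoint hag)]
  calc a * g * b ≤ β ^ 2 • a + α ^ 2 • b :=
        mul_mul_le_of_mul_mul_add_eq ha.isSelfAdjoint hb.isSelfAdjoint hg hag hbg hαβ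
    _ ≤ β ^ 2 • algebraMap ℝ 𝒜 ‖a‖ + α ^ 2 • algebraMap ℝ 𝒜 ‖b‖ := by
        gcongr <;> exact IsSelfAdjoint.le_algebraMap_norm_self
    _ = algebraMap ℝ 𝒜 (‖a‖ * ‖b‖ / (‖a‖ + ‖b‖)) := by
        simp only [Algebra.smul_def, ← map_mul, ← map_add, α, β]
        congr 1
        field_simp
        ring

end CStarAlgebra

omit [CompleteSpace H] in
theorem re_inner_apply_le_of_le {X X' : H →L[ℂ] H} (h : X ≤ X') (v : H) :
    re ⟪X v, v⟫_ℂ ≤ re ⟪X' v, v⟫_ℂ := by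
  simpa [inner_sub_left] using ((le_def X X').mp h).re_inner_nonneg_left v

theorem hasDerivAt_re_inner_exp_smul_apply (X Y : H →L[ℂ] H) (x : H) (t : ℝ) :
    HasDerivAt (fun t : ℝ ↦ re ⟪X (exp (t • Y) x), exp (t • Y) x⟫_ℂ)
      (re ⟪(star Y * X + X * Y) (exp (t • Y) x), exp (t • Y) x⟫_ℂ) t := by
  have hw : HasDerivAt (fun t : ℝ ↦ exp (t • Y) x) (Y (exp (t • Y) x)) t :=
    ((apply ℂ H x).restrictScalars ℝ).hasFDerivAt.comp_hasDerivAt t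
      (hasDerivAt_exp_smul_const' Y t)
  have hXw := (X.restrictScalars ℝ).hasFDerivAt.comp_hasDerivAt t hw
  refine (Complex.reCLM.hasFDerivAt.comp_hasDerivAt t (hXw.inner ℂ hw)).congr_deriv ?_
  simp [star_eq_adjoint, adjoint_inner_left, add_comm]

theorem re_inner_exp_smul_apply_eq {S Y : H →L[ℂ] H} (h : star Y * S + S * Y = 0) (x : H)
    (t : ℝ) : re ⟪S (exp (t • Y) x), exp (t • Y) x⟫_ℂ = re ⟪S x, x⟫_ℂ := by
  have hderiv := fun t ↦ hasDerivAt_re_inner_exp_smul_apply S Y x t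
  simp only [h, zero_apply, inner_zero_left, map_zero] at hderiv
  simpa using is_const_of_deriv_eq_zero (fun t ↦ (hderiv t).differentiableAt)
    (fun t ↦ (hderiv t).deriv) t 0

theorem re_inner_apply_mul_le {S R Y : H →L[ℂ] H} (hR : 0 ≤ R) (hRS : R ≤ S)
    (hskew : star Y * S + S * Y = 0) (hgrow : star Y * Y ≤ star Y * R + R * Y) (x : H) {t : ℝ}
    (ht : 0 ≤ t) : re ⟪S (Y x), Y x⟫_ℂ * t ≤ ‖S‖ * re ⟪S x, x⟫_ℂ := by
  set m := re ⟪S (Y x), Y x⟫_ℂ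
  set w : ℝ → H := fun t ↦ exp (t • Y) x
  have hm : ∀ t, m ≤ ‖S‖ * ‖Y (w t)‖ ^ 2 := fun t ↦ by
    have hcomm : exp (t • Y) (Y x) = Y (w t) :=
      congr($(((Commute.refl Y).smul_left t).exp_left.eq) x)
    calc m = re ⟪S (Y (w t)), Y (w t)⟫_ℂ := by rw [← hcomm, re_inner_exp_smul_apply_eq hskew]
      _ ≤ ‖S (Y (w t))‖ * ‖Y (w t)‖ := re_inner_le_norm _ _
      _ ≤ ‖S‖ * ‖Y (w t)‖ * ‖Y (w t)‖ := by gcongr; exact le_opNorm _ _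
      _ = ‖S‖ * ‖Y (w t)‖ ^ 2 := by ring
  have hmono : Monotone fun t ↦ ‖S‖ * re ⟪R (w t), w t⟫_ℂ - m * t := by
    refine monotone_of_hasDerivAt_nonneg
      (fun t ↦ ((hasDerivAt_re_inner_exp_smul_apply R Y x t).const_mul ‖S‖).sub
        ((hasDerivAt_id t).const_mul m)) fun t ↦ ?_
    have hY : ‖Y (w t)‖ ^ 2 ≤ re ⟪(star Y * R + R * Y) (w t), w t⟫_ℂ := by
      rw [apply_norm_sq_eq_inner_adjoint_left, ← star_eq_adjoint]
      exact re_inner_apply_le_of_le hgrow _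
    have := mul_le_mul_of_nonneg_left hY (norm_nonneg S)
    simp only [Pi.zero_apply, mul_one]
    linarith [hm t]
  have hw0 : w 0 = x := by simp [w]
  have h0 : ‖S‖ * re ⟪R x, x⟫_ℂ ≤ ‖S‖ * re ⟪R (w t), w t⟫_ℂ - m * t := by
    simpa only [hw0, mul_zero, sub_zero] using hmono ht
  have hbdd : re ⟪R (w t), w t⟫_ℂ ≤ re ⟪S x, x⟫_ℂ :=
    (re_inner_apply_le_of_le hRS (w t)).trans (re_inner_exp_smul_apply_eq hskew x t).le
  have hR0 : 0 ≤ re ⟪R x, x⟫_ℂ := ((nonneg_iff_isPositive R).mp hR).re_inner_nonneg_left x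
  nlinarith [mul_nonneg (norm_nonneg S) hR0, mul_le_mul_of_nonneg_left hbdd (norm_nonneg S)]

theorem mul_eq_zero_of_skew_of_star_mul_self_le {S R Y : H →L[ℂ] H} (hR : 0 ≤ R) (hRS : R ≤ S)
    (hskew : star Y * S + S * Y = 0) (hgrow : star Y * Y ≤ star Y * R + R * Y) :
    S * Y = 0 := by
  have hS : 0 ≤ S := hR.trans hRS
  refine mul_eq_zero_of_star_mul_mul_eq_zero hS
    (le_antisymm ?_ (star_left_conjugate_nonneg hS Y))
  rw [le_def, zero_sub, isPositive_def']
  refine ⟨(IsSelfAdjoint.of_nonneg (star_left_conjugate_nonneg hS Y)).neg, fun x ↦ ?_⟩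
  suffices re ⟪S (Y x), Y x⟫_ℂ ≤ 0 by
    simpa [reApplyInnerSelf_apply, star_eq_adjoint, adjoint_inner_left] using this
  have hlin := fun t (ht : 0 ≤ t) ↦ re_inner_apply_mul_le hR hRS hskew hgrow x ht
  have hK : 0 ≤ ‖S‖ * re ⟪S x, x⟫_ℂ := by simpa using hlin 0 le_rfl
  by_contra! hm
  have := hlin _ (div_nonneg (add_nonneg hK zero_le_one) hm.le)
  rw [mul_div_cancel₀ _ hm.ne'] at this
  linarith

namespace IsMPInv

variable {T D s : H →L[ℂ] H}

theorem mul_inv_mul (hD : IsMPInv T D) : T * D * T = T := by rw [mul_assoc]; exact hD.1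

theorem inv_mul_inv (hD : IsMPInv T D) : D * T * D = D := by rw [mul_assoc]; exact hD.2.1

theorem isSelfAdjoint_inv_mul (hD : IsMPInv T D) : IsSelfAdjoint (D * T) := hD.2.2.2

theorem isStarProjection_mul_inv (hD : IsMPInv T D) : IsStarProjection (T * D) :=
  ⟨by rw [IsIdempotentElem, ← mul_assoc, hD.mul_inv_mul], hD.2.2.1⟩

theorem star_mul_mul_inv (hD : IsMPInv T D) : star T * T * D = star T := by
  rw [mul_assoc, ← hD.isStarProjection_mul_inv.isSelfAdjoint.star_eq, ← star_mul,
    hD.mul_inv_mul]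

variable (hD : IsMPInv T D) (hs : IsSelfAdjoint s) (hsT : s * s = star T * T)
include hD hs hsT

theorem star_abs_mul_inv_mul_abs : star (s * D) * s = T := by
  rw [star_mul, hs.star_eq, mul_assoc, hsT, ← mul_assoc, ← star_mul,
    hD.isStarProjection_mul_inv.isSelfAdjoint.star_eq, hD.mul_inv_mul]

theorem star_mul_self_abs_mul_inv : star (s * D) * (s * D) = T * D := by
  rw [← mul_assoc, hD.star_abs_mul_inv_mul_abs hs hsT]

theorem abs_mul_inv_mul : s * (D * T) = s := by
  refine mul_eq_self_of_star_mul_self_eq (y := T) (by rw [hs.star_eq, hsT]) ?_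
  rw [← mul_assoc, hD.mul_inv_mul]

theorem commute_abs_inv_mul_star : Commute s (D * star D) := by
  have hsP := hD.abs_mul_inv_mul hs hsT
  have hPs : D * T * s = s := by
    simpa only [star_mul, hs.star_eq, hD.isSelfAdjoint_inv_mul.star_eq] using congr_arg star hsP
  have hGss : D * star D * (s * s) = D * T := by
    rw [hsT, mul_assoc, ← mul_assoc (star D), ← star_mul,
      hD.isStarProjection_mul_inv.isSelfAdjoint.star_eq, ← mul_assoc, ← mul_assoc,
      hD.inv_mul_inv]
  have hssG : s * s * (D * star D) = D * T := by
    rw [hsT, ← mul_assoc, hD.star_mul_mul_inv, ← star_mul, hD.isSelfAdjoint_inv_mul.star_eq]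
  calc s * (D * star D) = D * T * s * (D * star D) := by rw [hPs]
    _ = D * star D * s * (s * s * (D * star D)) := by rw [← hGss]; noncomm_ring
    _ = D * star D * s := by rw [hssG, mul_assoc, hsP]

theorem inv_mul_star_abs_mul_inv_nonneg (hs0 : 0 ≤ s) : 0 ≤ D * star (s * D) := by
  have hg : IsSelfAdjoint (D * star (s * D)) := by
    rw [IsSelfAdjoint, star_mul, star_star, star_mul, hs.star_eq, mul_assoc,
      (hD.commute_abs_inv_mul_star hs hsT).eq, mul_assoc]
  have hgsg : star (D * star (s * D)) * s * (D * star (s * D)) = D * star (s * D) := by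
    rw [hg.star_eq, mul_assoc D, hD.star_abs_mul_inv_mul_abs hs hsT, ← mul_assoc, hD.inv_mul_inv]
  exact hgsg ▸ star_left_conjugate_nonneg hs0 _

end IsMPInv

section AbsAdd

variable {A B a b D : H →L[ℂ] H} (ha : 0 ≤ a) (hb : 0 ≤ b) (haA : a * a = star A * A)
  (hbB : b * b = star B * B) (hT : (a + b) * (a + b) = star (A + B) * (A + B))
  (hD : IsMPInv (A + B) D)
include ha hb haA hbB hT hD

theorem star_mul_add_mul_eq_zero_of_abs_add :
    star ((a + b) * D * A - a) * (a + b) + (a + b) * ((a + b) * D * A - a) = 0 := by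
  have hs : IsSelfAdjoint (a + b) := ha.isSelfAdjoint.add hb.isSelfAdjoint
  have hU : star ((a + b) * D) * (a + b) = A + B := hD.star_abs_mul_inv_mul_abs hs hT
  have hsU : (a + b) * (a + b) * D = star (A + B) := by rw [hT, hD.star_mul_mul_inv]
  calc _ = star A * (star ((a + b) * D) * (a + b)) + (a + b) * (a + b) * D * A
        - (a * (a + b) + (a + b) * a) := by
          rw [star_sub, star_mul _ A, ha.isSelfAdjoint.star_eq]; noncomm_ring
    _ = (star (A + B) * (A + B) - (a + b) * (a + b)) + (star A * A - a * a)
        - (star B * B - b * b) := by rw [hU, hsU, star_add]; noncomm_ring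
    _ = 0 := by rw [hT, haA, hbB]; simp

theorem abs_mul_inv_mul_left_of_abs_add : (a + b) * D * A = a := by
  have hs : IsSelfAdjoint (a + b) := ha.isSelfAdjoint.add hb.isSelfAdjoint
  set Y := (a + b) * D * A - a with hY
  have hskew : star Y * (a + b) + (a + b) * Y = 0 :=
    star_mul_add_mul_eq_zero_of_abs_add ha hb haA hbB hT hD
  have hcontr : star ((a + b) * D * A) * ((a + b) * D * A) ≤ a * a := calc
    _ = star A * (star ((a + b) * D) * ((a + b) * D)) * A := by
      rw [star_mul _ A]; noncomm_ring
    _ = star A * ((A + B) * D) * A := by rw [hD.star_mul_self_abs_mul_inv hs hT]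
    _ ≤ star A * 1 * A := star_left_conjugate_le_conjugate hD.isStarProjection_mul_inv.le_one A
    _ = a * a := by rw [mul_one, haA]
  have hgrow : star Y * Y ≤ star Y * b + b * Y := by
    have : star Y * b + b * Y - star Y * Y = (a * a - star ((a + b) * D * A) * ((a + b) * D * A))
        + (star Y * (a + b) + (a + b) * Y) := by
      rw [hY, star_sub, ha.isSelfAdjoint.star_eq]; noncomm_ring
    rw [← sub_nonneg, this, hskew, add_zero, sub_nonneg]
    exact hcontr
  have hsY : (a + b) * Y = 0 :=
    mul_eq_zero_of_skew_of_star_mul_self_le hb (le_add_of_nonneg_left ha) hskew hgrow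
  have hTY : (A + B) * Y = 0 := mul_eq_zero_of_star_mul_self_eq (by rw [← hT, hs.star_eq]) hsY
  have haP : a * (D * (A + B)) = a :=
    mul_eq_self_of_le ha (le_add_of_nonneg_right hb) (hD.abs_mul_inv_mul hs hT)
  have haY : a * Y = 0 := by rw [← haP, mul_assoc, mul_assoc, hTY, mul_zero, mul_zero]
  have hYY : star Y * Y = 0 := calc
    star Y * Y = star A * star D * ((a + b) * Y) - a * Y := by
      rw [hY, star_sub, star_mul _ A, star_mul, hs.star_eq, ha.isSelfAdjoint.star_eq]
      noncomm_ring
    _ = 0 := by rw [hsY, haY, mul_zero, sub_zero]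
  exact sub_eq_zero.mp ((CStarRing.star_mul_self_eq_zero_iff _).mp hYY)

theorem abs_mul_inv_mul_right_of_abs_add : (a + b) * D * B = b := by
  have hsP := hD.abs_mul_inv_mul (ha.isSelfAdjoint.add hb.isSelfAdjoint) hT
  rw [← mul_assoc, mul_add, abs_mul_inv_mul_left_of_abs_add ha hb haA hbB hT hD] at hsP
  exact add_left_cancel hsP

theorem mul_inv_mul_left_of_abs_add : (A + B) * D * A = A := by
  have hs : IsSelfAdjoint (a + b) := ha.isSelfAdjoint.add hb.isSelfAdjoint
  refine hD.isStarProjection_mul_inv.mul_eq_self_of_star_mul_mul_eq ?_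
  calc star A * ((A + B) * D) * A
      = star ((a + b) * D * A) * ((a + b) * D * A) := by
        rw [← hD.star_mul_self_abs_mul_inv hs hT, star_mul _ A]; noncomm_ring
    _ = star A * A := by
        rw [abs_mul_inv_mul_left_of_abs_add ha hb haA hbB hT hD, ha.isSelfAdjoint.star_eq, haA]

theorem mul_inv_mul_right_of_abs_add : (A + B) * D * B = B := calc
  (A + B) * D * B = (A + B) * D * (A + B) - (A + B) * D * A := by noncomm_ring
  _ = B := by rw [hD.mul_inv_mul, mul_inv_mul_left_of_abs_add ha hb haA hbB hT hD]; abel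

theorem norm_mul_inv_mul_le_of_abs_add : ‖A * D * B‖ ≤ ‖A‖ * ‖B‖ / (‖A‖ + ‖B‖) := by
  have hs0 : 0 ≤ a + b := add_nonneg ha hb
  have hs : IsSelfAdjoint (a + b) := .of_nonneg hs0
  have hsP := hD.abs_mul_inv_mul hs hT
  have hUA := abs_mul_inv_mul_left_of_abs_add ha hb haA hbB hT hD
  have hUB := abs_mul_inv_mul_right_of_abs_add ha hb haA hbB hT hD
  have hUU := hD.star_mul_self_abs_mul_inv hs hT
  set U := (a + b) * D
  have hADB : A * D * B = star U * (a * (D * star U) * b) := calc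
    A * D * B = (A + B) * D * A * (D * ((A + B) * D)) * B := by
      rw [mul_inv_mul_left_of_abs_add ha hb haA hbB hT hD, ← mul_assoc D, hD.inv_mul_inv]
    _ = star U * (U * A * (D * star U) * (U * B)) := by rw [← hUU]; noncomm_ring
    _ = star U * (a * (D * star U) * b) := by rw [hUA, hUB]
  have hgs : D * star U * (a + b) = D * (A + B) := by
    rw [mul_assoc, hD.star_abs_mul_inv_mul_abs hs hT]
  have hg : 0 ≤ D * star U := hD.inv_mul_star_abs_mul_inv_nonneg hs hT hs0
  have hnA : ‖a‖ = ‖A‖ := norm_eq_of_star_mul_self_eq (by rw [ha.isSelfAdjoint.star_eq, haA])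
  have hnB : ‖b‖ = ‖B‖ := norm_eq_of_star_mul_self_eq (by rw [hb.isSelfAdjoint.star_eq, hbB])
  calc ‖A * D * B‖ ≤ ‖star U‖ * ‖a * (D * star U) * b‖ := hADB ▸ norm_mul_le _ _
    _ ≤ 1 * (‖a‖ * ‖b‖ / (‖a‖ + ‖b‖)) := by
      gcongr
      · exact norm_star U ▸ norm_le_one_of_isStarProjection_star_mul_self
          (hUU ▸ hD.isStarProjection_mul_inv)
      · refine norm_mul_mul_le_of_mul_mul_add_eq ha hb hg ?_ ?_ <;>
          rw [mul_assoc, hgs, ← mul_assoc]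
        exacts [mul_eq_self_of_le ha (le_add_of_nonneg_right hb) hsP,
          mul_eq_self_of_le hb (le_add_of_nonneg_left ha) hsP]
    _ = ‖A‖ * ‖B‖ / (‖A‖ + ‖B‖) := by rw [one_mul, hnA, hnB]

end AbsAdd

theorem parallel_summable_of_abs_add_general (A B sA sB sAB D : H →L[ℂ] H)
    (hsA : sA.IsPositive) (hsA2 : sA ∘L sA = adjoint A ∘L A)
    (hsB : sB.IsPositive) (hsB2 : sB ∘L sB = adjoint B ∘L B)
    (hsAB2 : sAB ∘L sAB = adjoint (A + B) ∘L (A + B))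
    (habs : sAB = sA + sB) (hD : IsMPInv (A + B) D) :
    A ∘L D ∘L (A + B) = A ∧ (A + B) ∘L D ∘L B = B ∧
      ‖A ∘L D ∘L B‖ ≤ ‖A‖ * ‖B‖ / (‖A‖ + ‖B‖) := by
  subst habs
  have ha : 0 ≤ sA := (nonneg_iff_isPositive sA).mpr hsA
  have hb : 0 ≤ sB := (nonneg_iff_isPositive sB).mpr hsB
  have hs : IsSelfAdjoint (sA + sB) := .of_nonneg (add_nonneg ha hb)
  have hAP : A * (D * (A + B)) = A :=
    mul_eq_self_of_star_mul_self_eq (y := sA) (by rw [ha.isSelfAdjoint.star_eq]; exact hsA2.symm)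
      (mul_eq_self_of_le ha (le_add_of_nonneg_right hb) (hD.abs_mul_inv_mul hs hsAB2))
  refine ⟨hAP, ?_, ?_⟩
  · show (A + B) * (D * B) = B
    rw [← mul_assoc]
    exact mul_inv_mul_right_of_abs_add ha hb hsA2 hsB2 hsAB2 hD
  · show ‖A * (D * B)‖ ≤ _
    rw [← mul_assoc]
    exact norm_mul_inv_mul_le_of_abs_add ha hb hsA2 hsB2 hsAB2 hD

/-- If `|A + B| = |A| + |B|` and `A + B` is M-P invertible, then `A` and `B` are parallel
summable and the norm bound `‖A : B‖ ≤ ‖A‖ ‖B‖ / (‖A‖ + ‖B‖)` holds. -/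
theorem parallel_summable_of_abs_add (A B sA sB sAB D : H →L[ℂ] H)
    (hA0 : A ≠ 0) (hB0 : B ≠ 0)
    (hsA : sA.IsPositive) (hsA2 : sA ∘L sA = adjoint A ∘L A)
    (hsB : sB.IsPositive) (hsB2 : sB ∘L sB = adjoint B ∘L B)
    (hsAB : sAB.IsPositive) (hsAB2 : sAB ∘L sAB = adjoint (A + B) ∘L (A + B))
    (habs : sAB = sA + sB) (hD : IsMPInv (A + B) D) :
    A ∘L D ∘L (A + B) = A ∧ (A + B) ∘L D ∘L B = B ∧
      ‖A ∘L D ∘L B‖ ≤ ‖A‖ * ‖B‖ / (‖A‖ + ‖B‖) :=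
  parallel_summable_of_abs_add_general A B sA sB sAB D hsA hsA2 hsB hsB2 hsAB2 habs hD
end

section
/- There exist self-adjoint operators A, B on the two-dimensional complex Hilbert space ℂ² (concretely one may take the matrices A = [[0, i], [−i, 0]] and B = [[0, 1−i], [1+i, 0]], acting on ℂ² with the Euclidean inner product) such that A, B and A + B are all invertible (hence M-P invertible), ‖A‖ = 1, ‖B‖ = √2, and ‖A∘(A+B)⁻¹∘B‖ = √2; in particular ‖A∘(A+B)⁻¹∘B‖ > (‖A‖·‖B‖)/(‖A‖ + ‖B‖), so the norm bound for the parallel sum can fail for self-adjoint (non-positive) operators. -/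
/-!
All three operators are images of anti-diagonal matrices `!![0, a; b, 0]` under the
`⋆`-algebra isomorphism `Matrix.toEuclideanCLM`. Such a matrix `M` with `‖a‖ = ‖b‖` satisfies
`Mᴴ M = ‖a‖² • 1`, so the C⋆-identity gives operator norm `‖a‖` without estimating vectors.
With `A + B = !![0, 1; 1, 0]`, an involution, the parallel sum is
`A (A + B) B = !![0, 1 + i; 1 - i, 0]`, of norm `√2`, whereas
`‖A‖ ‖B‖ / (‖A‖ + ‖B‖) = √2 / (1 + √2) < √2`.
-/

open Complex Matrix

theorem norm_eq_sqrt_of_star_mul_self_eq_smul_one {𝕜 E : Type*} [NormedField 𝕜]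
    [NormedRing E] [StarRing E] [CStarRing E] [NormedAlgebra 𝕜 E] [NormOneClass E]
    {x : E} {c : 𝕜} (h : star x * x = c • 1) : ‖x‖ = √‖c‖ := by
  have hx := CStarRing.norm_star_mul_self (x := x)
  rw [h, norm_smul, norm_one, mul_one] at hx
  rw [hx, Real.sqrt_mul_self (norm_nonneg _)]

theorem Ring.inverse_eq_self_of_mul_self_eq_one {M₀ : Type*} [MonoidWithZero M₀] {x : M₀}
    (h : x * x = 1) : Ring.inverse x = x :=
  Ring.inverse_unit ⟨x, x, h, h⟩

theorem Complex.norm_one_add_I : ‖1 + I‖ = √2 := by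
  simp [Complex.norm_def, normSq_apply]
  norm_num

theorem Complex.norm_one_sub_I : ‖1 - I‖ = √2 := by
  simp [Complex.norm_def, normSq_apply]
  norm_num

namespace Matrix

variable {R : Type*}

theorem conjTranspose_antidiag [AddMonoid R] [StarAddMonoid R] (a b : R) :
    (!![0, a; b, 0])ᴴ = !![0, star b; star a, 0] := by
  ext i j
  fin_cases i <;> fin_cases j <;> simp

theorem isUnit_antidiag [CommRing R] {a b : R} (ha : IsUnit a) (hb : IsUnit b) :
    IsUnit !![0, a; b, 0] := by
  rw [isUnit_iff_isUnit_det, det_fin_two_of]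
  simpa using (ha.mul hb).neg

theorem norm_toEuclideanCLM_antidiag {𝕜 : Type*} [RCLike 𝕜] {a b : 𝕜} (h : ‖b‖ = ‖a‖) :
    ‖toEuclideanCLM (n := Fin 2) (𝕜 := 𝕜) !![0, a; b, 0]‖ = ‖a‖ := by
  have hM : star !![0, a; b, 0] * !![0, a; b, 0] = ((‖a‖ ^ 2 : ℝ) : 𝕜) • 1 := by
    simp [star_eq_conjTranspose, conjTranspose_antidiag, RCLike.conj_mul, h, one_fin_two]
  rw [norm_eq_sqrt_of_star_mul_self_eq_smul_one (c := ((‖a‖ ^ 2 : ℝ) : 𝕜)),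
    RCLike.norm_ofReal, abs_of_nonneg (by positivity), Real.sqrt_sq (norm_nonneg _)]
  rw [← map_star, ← map_mul, hM, map_smul, map_one]

end Matrix

/-- There exist self-adjoint operators `A`, `B` on `ℂ²` with `A`, `B`, `A + B` invertible,
`‖A‖ = 1`, `‖B‖ = √2` and `‖A (A+B)⁻¹ B‖ = √2 > ‖A‖ ‖B‖ / (‖A‖ + ‖B‖)`: the norm bound for
the parallel sum fails for self-adjoint operators. -/
theorem norm_bound_fails_selfadjoint :
    ∃ A B : EuclideanSpace ℂ (Fin 2) →L[ℂ] EuclideanSpace ℂ (Fin 2),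
      IsSelfAdjoint A ∧ IsSelfAdjoint B ∧
      IsUnit A ∧ IsUnit B ∧ IsUnit (A + B) ∧
      ‖A‖ = 1 ∧ ‖B‖ = Real.sqrt 2 ∧
      ‖A * Ring.inverse (A + B) * B‖ = Real.sqrt 2 ∧
      ‖A * Ring.inverse (A + B) * B‖ > ‖A‖ * ‖B‖ / (‖A‖ + ‖B‖) := by
  let f := toEuclideanCLM (n := Fin 2) (𝕜 := ℂ)
  have hsum : !![0, I; -I, 0] + !![0, 1 - I; 1 + I, 0] = !![(0 : ℂ), 1; 1, 0] := by simp
  have hinv : Ring.inverse (f !![0, 1; 1, 0]) = f !![0, 1; 1, 0] :=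
    Ring.inverse_eq_self_of_mul_self_eq_one (by rw [← map_mul, ← map_one f]; simp [one_fin_two])
  have hprod : !![0, I; -I, 0] * !![0, 1; 1, 0] * !![0, 1 - I; 1 + I, 0] =
      !![0, 1 + I; 1 - I, 0] := by
    simp only [mul_fin_two]
    ring_nf
    simp only [I_sq]
    ring_nf
  have hnorm_eq : ‖1 - I‖ = ‖1 + I‖ := by rw [norm_one_add_I, norm_one_sub_I]
  have hP : ‖f !![0, I; -I, 0] * Ring.inverse (f !![0, I; -I, 0] + f !![0, 1 - I; 1 + I, 0]) *
      f !![0, 1 - I; 1 + I, 0]‖ = √2 := by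
    rw [← map_add, hsum, hinv, ← map_mul, ← map_mul, hprod,
      norm_toEuclideanCLM_antidiag hnorm_eq, norm_one_add_I]
  have hA : ‖f !![0, I; -I, 0]‖ = 1 := by rw [norm_toEuclideanCLM_antidiag (by simp)]; simp
  have hB : ‖f !![0, 1 - I; 1 + I, 0]‖ = √2 := by
    rw [norm_toEuclideanCLM_antidiag hnorm_eq.symm, norm_one_sub_I]
  refine ⟨f !![0, I; -I, 0], f !![0, 1 - I; 1 + I, 0], ?_, ?_, ?_, ?_, ?_, hA, hB, hP, ?_⟩
  · exact IsSelfAdjoint.map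
      (by simp [IsSelfAdjoint, star_eq_conjTranspose, conjTranspose_antidiag]) f
  · exact IsSelfAdjoint.map
      (by simp [IsSelfAdjoint, star_eq_conjTranspose, conjTranspose_antidiag, sub_eq_add_neg]) f
  · exact (isUnit_antidiag (by simp) (by simp)).map f
  · refine (isUnit_antidiag ?_ ?_).map f <;>
      simp [isUnit_iff_ne_zero, ← norm_ne_zero_iff, norm_one_sub_I, norm_one_add_I]
  · rw [← map_add, hsum]
    exact (isUnit_antidiag isUnit_one isUnit_one).map f
  · rw [hA, hB, hP, one_mul, gt_iff_lt]
    exact div_lt_self (by positivity) (by linarith [Real.sqrt_pos.2 two_pos])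
end

section
/- Let H be a complex Hilbert space and let T be a bounded linear operator on H. Then the range of T equals the range of (T∘T*)^{1/2}, the positive square root of T∘T*. -/
open ContinuousLinearMap

variable {H : Type*} [NormedAddCommGroup H] [InnerProductSpace ℂ H] [CompleteSpace H]

/-! Douglas' range inclusion: if `‖A† x‖ ≤ c ‖B† x‖` for all `x`, then `A u` is in the range of `B`,
because `B† x ↦ ⟪A u, x⟫` is a well-defined bounded functional on the range of `B†`; extending it by
Hahn–Banach and representing it by Riesz gives a `z` with `B z = A u`. Since `S` is self-adjoint,
`S S† = S² = T T†`, so `‖S x‖ = ‖T† x‖` and the inclusion holds both ways. -/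

theorem LinearMap.exists_comp_rangeRestrict_eq_of_ker_le {R M N P : Type*} [Ring R]
    [AddCommGroup M] [Module R M] [AddCommGroup N] [Module R N] [AddCommGroup P] [Module R P]
    (f : M →ₗ[R] N) (g : M →ₗ[R] P) (hfg : LinearMap.ker f ≤ LinearMap.ker g) :
    ∃ h : LinearMap.range f →ₗ[R] P, h ∘ₗ f.rangeRestrict = g :=
  ⟨(LinearMap.ker f).liftQ g hfg ∘ₗ f.quotKerEquivRange.symm.toLinearMap, by
    ext x
    change (LinearMap.ker f).liftQ g hfg
      (f.quotKerEquivRange.symm ⟨f x, LinearMap.mem_range_self f x⟩) = g x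
    rw [quotKerEquivRange_symm_apply_image]
    rfl⟩

section

variable {𝕜 E F G : Type*} [RCLike 𝕜]

theorem exists_strongDual_comp_eq_of_norm_le [NormedAddCommGroup E] [NormedSpace 𝕜 E]
    [NormedAddCommGroup G] [NormedSpace 𝕜 G] (A : E →L[𝕜] G) (φ : E →ₗ[𝕜] 𝕜) (c : ℝ)
    (hφ : ∀ x, ‖φ x‖ ≤ c * ‖A x‖) : ∃ ψ : StrongDual 𝕜 G, ∀ x, ψ (A x) = φ x := by
  have hker : LinearMap.ker (A : E →ₗ[𝕜] G) ≤ LinearMap.ker φ := fun x (hx : A x = 0) ↦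
    norm_le_zero_iff.mp (by simpa [hx] using hφ x)
  obtain ⟨ψ₀, hψ₀⟩ := LinearMap.exists_comp_rangeRestrict_eq_of_ker_le _ φ hker
  have hψ₀_apply (x : E) : ψ₀ ⟨A x, x, rfl⟩ = φ x := LinearMap.congr_fun hψ₀ x
  have hbound : ∀ w, ‖ψ₀ w‖ ≤ c * ‖w‖ := by
    rintro ⟨_, x, rfl⟩
    simpa [hψ₀_apply] using hφ x
  obtain ⟨ψ, hψ, -⟩ := exists_extension_norm_eq _ (ψ₀.mkContinuous c hbound)
  exact ⟨ψ, fun x ↦ (hψ ⟨A x, x, rfl⟩).trans (hψ₀_apply x)⟩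

variable [NormedAddCommGroup E] [InnerProductSpace 𝕜 E] [CompleteSpace E]
  [NormedAddCommGroup F] [InnerProductSpace 𝕜 F] [CompleteSpace F]
  [NormedAddCommGroup G] [InnerProductSpace 𝕜 G] [CompleteSpace G]

theorem mem_range_of_norm_inner_le_norm_adjoint (B : G →L[𝕜] F) (y : F) (c : ℝ)
    (h : ∀ x, ‖inner 𝕜 y x‖ ≤ c * ‖adjoint B x‖) : y ∈ Set.range B := by
  obtain ⟨ψ, hψ⟩ := exists_strongDual_comp_eq_of_norm_le (adjoint B) (innerₛₗ 𝕜 y) c h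
  refine ⟨(InnerProductSpace.toDual 𝕜 G).symm ψ, ext_inner_right 𝕜 fun x ↦ ?_⟩
  rw [← adjoint_inner_right, InnerProductSpace.toDual_symm_apply, hψ, innerₛₗ_apply_apply]

theorem range_subset_range_of_norm_adjoint_le (A : E →L[𝕜] F) (B : G →L[𝕜] F) (c : ℝ)
    (h : ∀ x, ‖adjoint A x‖ ≤ c * ‖adjoint B x‖) : Set.range A ⊆ Set.range B := by
  rintro _ ⟨u, rfl⟩
  refine mem_range_of_norm_inner_le_norm_adjoint B (A u) (‖u‖ * c) fun x ↦ ?_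
  calc ‖inner 𝕜 (A u) x‖ = ‖inner 𝕜 u (adjoint A x)‖ := by rw [adjoint_inner_right]
    _ ≤ ‖u‖ * ‖adjoint A x‖ := norm_inner_le_norm _ _
    _ ≤ ‖u‖ * (c * ‖adjoint B x‖) := by gcongr; exact h x
    _ = ‖u‖ * c * ‖adjoint B x‖ := by ring

theorem range_eq_range_of_norm_adjoint_eq (A : E →L[𝕜] F) (B : G →L[𝕜] F)
    (h : ∀ x, ‖adjoint A x‖ = ‖adjoint B x‖) : Set.range A = Set.range B :=
  (range_subset_range_of_norm_adjoint_le A B 1 (by simp [h])).antisymm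
    (range_subset_range_of_norm_adjoint_le B A 1 (by simp [h]))

theorem norm_adjoint_apply_eq_of_comp_adjoint_eq {A : E →L[𝕜] F} {B : G →L[𝕜] F}
    (h : A ∘L adjoint A = B ∘L adjoint B) (x : F) : ‖adjoint A x‖ = ‖adjoint B x‖ := by
  rw [← sq_eq_sq₀ (norm_nonneg _) (norm_nonneg _), apply_norm_sq_eq_inner_adjoint_left,
    apply_norm_sq_eq_inner_adjoint_left, adjoint_adjoint, adjoint_adjoint, h]

end

/-- The range of `T` equals the range of `(T T*)^{1/2}`. -/
theorem range_eq_range_sqrt (T S : H →L[ℂ] H)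
    (hS : S.IsPositive) (hS2 : S ∘L S = T ∘L adjoint T) :
    Set.range ⇑T = Set.range ⇑S := by
  have hS_adjoint : adjoint S = S := hS.isSelfAdjoint.adjoint_eq
  have hS_comp : T ∘L adjoint T = S ∘L adjoint S := by rw [hS_adjoint, hS2]
  exact range_eq_range_of_norm_adjoint_eq T S (norm_adjoint_apply_eq_of_comp_adjoint_eq hS_comp)
end

section
/- There exist a complex Hilbert space E and positive compact bounded linear operators A₁, B₁ on E such that for every compact bounded linear operator D on E and every λ ∈ ℂ, one has A₁^{1/2} ≠ (A₁ + B₁)^{1/2}∘(D + λ·I); that is, the equation A^{1/2} = (A+B)^{1/2}∘X has no solution X in the unital C*-algebra generated by the compact operators together with the identity. (Consequently, in the Hilbert C*-module setting, the operator equation A^{1/2} = (A+B)^{1/2}X with X adjointable can fail to be solvable for positive adjointable operators A, B.) -/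
/-!
On `ℓ²(ℕ, ℂ)` take the diagonal operators `A = diag (r²)` and `A + B = diag ((w r)²)`, where
`r n = 1 / (n + 1)` and `w n` is `1` or `2` according to the parity of `n`; they are compact since
their diagonals tend to zero. By uniqueness of positive square roots, `A^{1/2} = diag r` and
`(A + B)^{1/2} = diag (w r)`, so testing `A^{1/2} = (A + B)^{1/2} (D + λ)` on the basis vector `eₙ`
gives `⟪eₙ, D eₙ⟫ = 1 / wₙ - λ`. For compact `D` the left side tends to zero (along a subsequence
`D eₙ` converges, and `eₙ` tends weakly to zero by Bessel's inequality), while `1 / wₙ` alternates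
between `1` and `1 / 2`.
-/

open scoped lp ENNReal InnerProductSpace ComplexConjugate ComplexOrder
open Filter Topology

section CompactOperator

variable {𝕜 E F : Type*} [RCLike 𝕜] [NormedAddCommGroup E] [InnerProductSpace 𝕜 E]
  [NormedAddCommGroup F] [InnerProductSpace 𝕜 F]

theorem Orthonormal.tendsto_inner_right_zero {v : ℕ → F} (hv : Orthonormal 𝕜 v) (y : F) :
    Tendsto (fun n => ⟪v n, y⟫_𝕜) atTop (𝓝 0) := by
  have hsq : Tendsto (fun n => ‖⟪v n, y⟫_𝕜‖ ^ 2) atTop (𝓝 0) := by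
    simpa [Nat.cofinite_eq_atTop] using (hv.inner_products_summable y).tendsto_cofinite_zero
  rw [tendsto_zero_iff_norm_tendsto_zero]
  simpa [Real.sqrt_sq (norm_nonneg _)] using hsq.sqrt

theorem IsCompactOperator.tendsto_inner_orthonormal {T : E →L[𝕜] F} (hT : IsCompactOperator T)
    {u : ℕ → E} {C : ℝ} (hu : ∀ n, ‖u n‖ ≤ C) {v : ℕ → F} (hv : Orthonormal 𝕜 v) :
    Tendsto (fun n => ⟪v n, T (u n)⟫_𝕜) atTop (𝓝 0) := by
  refine tendsto_of_subseq_tendsto fun ns hns => ?_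
  obtain ⟨y, -, ms, hms, hy⟩ := (hT.isCompact_closure_image_closedBall C).tendsto_subseq
    (x := fun k => T (u (ns k))) fun k => subset_closure ⟨u (ns k), by simpa using hu (ns k), rfl⟩
  refine ⟨ms, ?_⟩
  have hsub : Tendsto (ns ∘ ms) atTop atTop := hns.comp hms.tendsto_atTop
  have hclose : Tendsto (fun k => ⟪v (ns (ms k)), T (u (ns (ms k))) - y⟫_𝕜) atTop (𝓝 0) := by
    refine squeeze_zero_norm (fun k => ?_) (by simpa using (tendsto_sub_nhds_zero_iff.2 hy).norm)
    simpa [hv.1] using norm_inner_le_norm (𝕜 := 𝕜) (v (ns (ms k))) (T (u (ns (ms k))) - y)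
  simpa [inner_sub_right] using ((hv.tendsto_inner_right_zero y).comp hsub).add hclose

theorem tendsto_div_of_eq_comp_add_smul_one {R S D : E →L[𝕜] E} (hD : IsCompactOperator D)
    (hS : S.IsSymmetric) {e : ℕ → E} (he : Orthonormal 𝕜 e) {r s : ℕ → 𝕜}
    (hR : ∀ n, R (e n) = r n • e n) (hSe : ∀ n, S (e n) = s n • e n) (hs : ∀ n, s n ≠ 0)
    {c : 𝕜} (h : R = S ∘L (D + c • 1)) : Tendsto (fun n => r n / s n) atTop (𝓝 c) := by
  have hratio : ∀ n, r n / s n = ⟪e n, D (e n)⟫_𝕜 + c := by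
    intro n
    have hs_real : conj (s n) = s n := by
      simpa [hSe, inner_smul_left, inner_smul_right, he.1 n] using hS (e n) (e n)
    have hr : r n = s n * (⟪e n, D (e n)⟫_𝕜 + c) := calc
      r n = ⟪e n, R (e n)⟫_𝕜 := by simp [hR, inner_smul_right, he.1 n]
      _ = ⟪S (e n), (D + c • 1) (e n)⟫_𝕜 := by rw [h]; exact (hS _ _).symm
      _ = s n * (⟪e n, D (e n)⟫_𝕜 + c) := by
        simp [hSe, inner_smul_left, inner_add_right, inner_smul_right, he.1 n, hs_real]; ring
    rw [hr, mul_div_cancel_left₀ _ (hs n)]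
  simpa [hratio] using
    ((hD.tendsto_inner_orthonormal (fun n => (he.1 n).le) he).add_const c)

end CompactOperator

theorem ContinuousLinearMap.IsPositive.eq_of_comp_self_eq {E : Type*} [NormedAddCommGroup E]
    [InnerProductSpace ℂ E] [CompleteSpace E] {S T : E →L[ℂ] E} (hS : S.IsPositive)
    (hT : T.IsPositive) (h : S ∘L S = T ∘L T) : S = T :=
  (CFC.mul_self_eq_mul_self_iff S T ((nonneg_iff_isPositive S).2 hS)
    ((nonneg_iff_isPositive T).2 hT)).1 h

namespace lp

section Single

variable {ι : Type*} [DecidableEq ι]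

lemma sum_single_apply {E : ι → Type*} [∀ i, NormedAddCommGroup (E i)] (p : ℝ≥0∞)
    (s : Finset ι) (f : ∀ i, E i) (j : ι) :
    (∑ i ∈ s, lp.single p i (f i)) j = if j ∈ s then f j else 0 := by
  rw [lp.coeFn_sum, Finset.sum_apply]
  simp [lp.single_apply, Finset.sum_pi_single]

theorem tendsto_sum_single_infty {E : ι → Type*} [∀ i, NormedAddCommGroup (E i)] {f : lp E ∞}
    (hf : Tendsto (fun i => ‖f i‖) cofinite (𝓝 0)) :
    Tendsto (fun s : Finset ι => ∑ i ∈ s, lp.single ∞ i (f i)) atTop (𝓝 f) := by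
  rw [Metric.tendsto_atTop]
  intro ε hε
  have hfin : {i | ε / 2 ≤ ‖f i‖}.Finite := by
    simpa [not_lt] using hf.eventually (gt_mem_nhds (half_pos hε))
  refine ⟨hfin.toFinset, fun s hs => ?_⟩
  rw [dist_eq_norm]
  refine (lp.norm_le_of_forall_le (half_pos hε).le fun i => ?_).trans_lt (half_lt_self hε)
  rw [lp.coeFn_sub, Pi.sub_apply, sum_single_apply]
  by_cases hi : i ∈ s
  · simpa [hi] using (half_pos hε).le
  · simpa [hi] using (not_le.1 fun h => hi (hs (hfin.mem_toFinset.2 h))).le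

lemma orthonormal_single {𝕜 : Type*} [RCLike 𝕜] :
    Orthonormal 𝕜 fun i : ι => lp.single 2 i (1 : 𝕜) := by
  rw [orthonormal_iff_ite]
  intro i j
  rw [lp.inner_single_left, lp.single_apply, Pi.single_apply]
  split_ifs <;> simp_all

end Single

section Diagonal

variable {ι 𝕜 : Type*} [RCLike 𝕜]

noncomputable def diagonal (c : ℓ^∞(ι, 𝕜)) : ℓ²(ι, 𝕜) →L[𝕜] ℓ²(ι, 𝕜) :=
  lp.mapCLM 2 (fun i => c i • 1) (norm_nonneg c) fun i => by
    simpa using lp.norm_apply_le_norm ENNReal.top_ne_zero c i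

@[simp] lemma diagonal_apply_apply (c : ℓ^∞(ι, 𝕜)) (x : ℓ²(ι, 𝕜)) (i : ι) :
    diagonal c x i = c i * x i := rfl

lemma norm_diagonal_le (c : ℓ^∞(ι, 𝕜)) : ‖diagonal c‖ ≤ ‖c‖ := lp.norm_mapCLM_le _ _ _ _

lemma diagonal_zero : diagonal (0 : ℓ^∞(ι, 𝕜)) = 0 := by ext; simp

lemma diagonal_add (c d : ℓ^∞(ι, 𝕜)) : diagonal (c + d) = diagonal c + diagonal d := by
  ext; simp [add_mul]

lemma diagonal_sub (c d : ℓ^∞(ι, 𝕜)) : diagonal (c - d) = diagonal c - diagonal d := by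
  ext; simp [sub_mul]

lemma diagonal_mul (c d : ℓ^∞(ι, 𝕜)) : diagonal (c * d) = diagonal c * diagonal d := by
  ext; simp [mul_assoc]

lemma diagonal_single [DecidableEq ι] (c : ℓ^∞(ι, 𝕜)) (i : ι) (a : 𝕜) :
    diagonal c (lp.single 2 i a) = c i • lp.single 2 i a := by
  ext j
  rcases eq_or_ne j i with rfl | hj <;> simp [*]

lemma isSymmetric_diagonal {c : ℓ^∞(ι, 𝕜)} (hc : ∀ i, conj (c i) = c i) :
    (diagonal c).IsSymmetric := by
  intro x y
  simp only [ContinuousLinearMap.coe_coe, lp.inner_eq_tsum, diagonal_apply_apply]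
  refine tsum_congr fun i => ?_
  simp only [RCLike.inner_apply, map_mul, hc]
  ring

lemma isPositive_diagonal {c : ℓ^∞(ι, 𝕜)} (hc : ∀ i, 0 ≤ c i) : (diagonal c).IsPositive := by
  refine (ContinuousLinearMap.isPositive_iff _).2
    ⟨isSymmetric_diagonal fun i => (hc i).isSelfAdjoint.star_eq, fun x => ?_⟩
  refine HasSum.nonneg (fun i => ?_) (lp.hasSum_inner _ _)
  rw [diagonal_apply_apply, RCLike.inner_apply, map_mul, mul_left_comm, RCLike.mul_conj]
  exact mul_nonneg (star_nonneg_iff.2 (hc i)) (by norm_cast; positivity)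

theorem isCompactOperator_diagonal {c : ℓ^∞(ι, 𝕜)} (hc : Tendsto (⇑c) cofinite (𝓝 0)) :
    IsCompactOperator (diagonal c) := by
  classical
  have hsingle (i : ι) (a : 𝕜) : IsCompactOperator (diagonal (lp.single ∞ i a)) := by
    have : ⇑(diagonal (lp.single ∞ i a)) =
        lp.single 2 i ∘ (a • lp.evalCLM 𝕜 (fun _ : ι => 𝕜) 2 i) := by
      funext x; ext j
      rcases eq_or_ne j i with rfl | hj <;> simp [lp.evalCLM, *]
    rw [this]
    exact (isCompactOperator_of_locallyCompactSpace_dom _).clm_comp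
      (lp.singleContinuousLinearMap 𝕜 _ 2 i)
  have hfin (s : Finset ι) : IsCompactOperator (diagonal (∑ i ∈ s, lp.single ∞ i (c i))) :=
    Finset.sum_induction _ (fun d => IsCompactOperator (diagonal d))
      (fun d d' h h' => by rw [diagonal_add]; exact h.add h')
      (by rw [diagonal_zero]; exact isCompactOperator_zero) fun i _ => hsingle i (c i)
  refine isCompactOperator_of_tendsto (l := atTop) ?_ (Eventually.of_forall hfin)
  rw [tendsto_iff_norm_sub_tendsto_zero]
  refine squeeze_zero (fun _ => norm_nonneg _) (fun s => ?_) (tendsto_iff_norm_sub_tendsto_zero.1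
    (tendsto_sum_single_infty (by simpa using hc.norm)))
  rw [← diagonal_sub]
  exact norm_diagonal_le _

end Diagonal

end lp

namespace SqrtEquationUnsolvable

open lp

noncomputable def invSucc : ℓ^∞(ℕ, ℂ) :=
  ⟨fun n => ((n + 1 : ℝ)⁻¹ : ℝ), memℓp_infty ⟨1, by
    rintro _ ⟨n, rfl⟩
    dsimp only
    rw [Complex.norm_real, Real.norm_of_nonneg (by positivity)]
    exact inv_le_one_of_one_le₀ (by simp)⟩⟩

noncomputable def parityWeight : ℓ^∞(ℕ, ℂ) :=
  ⟨fun n => if Even n then 1 else 2, memℓp_infty ⟨2, by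
    rintro _ ⟨n, rfl⟩
    dsimp only
    split_ifs <;> norm_num⟩⟩

lemma invSucc_apply (n : ℕ) : invSucc n = ((n + 1 : ℝ)⁻¹ : ℝ) := rfl

lemma parityWeight_apply (n : ℕ) : parityWeight n = if Even n then 1 else 2 := rfl

lemma invSucc_pos (n : ℕ) : 0 < invSucc n := by
  rw [invSucc_apply, Complex.zero_lt_real]; positivity

lemma one_le_parityWeight (n : ℕ) : 1 ≤ parityWeight n := by
  rw [parityWeight_apply]; split_ifs <;> norm_num

lemma tendsto_invSucc : Tendsto (⇑invSucc) cofinite (𝓝 0) := by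
  rw [Nat.cofinite_eq_atTop, ← Complex.ofReal_zero]
  exact ((Complex.continuous_ofReal.tendsto 0).comp tendsto_one_div_add_atTop_nhds_zero_nat).congr
    fun n => by simp [invSucc_apply]

lemma not_tendsto_inv_parityWeight (c : ℂ) :
    ¬ Tendsto (fun n => (parityWeight n)⁻¹) atTop (𝓝 c) := by
  intro h
  have hdouble : Tendsto (fun k : ℕ => 2 * k) atTop atTop :=
    tendsto_atTop_atTop.2 fun b => ⟨b, fun k hk => by omega⟩
  have heven : c = 1 :=
    tendsto_nhds_unique (h.comp hdouble) (by simp [Function.comp_def, parityWeight_apply])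
  have hodd : c = 2⁻¹ :=
    tendsto_nhds_unique (h.comp ((tendsto_add_atTop_nat 1).comp hdouble))
      (by simp [Function.comp_def, parityWeight_apply])
  norm_num [heven] at hodd

lemma parityWeight_mul_invSucc_pos (n : ℕ) : 0 < (parityWeight * invSucc) n := by
  rw [lp.infty_coeFn_mul, Pi.mul_apply]
  exact mul_pos (zero_lt_one.trans_le (one_le_parityWeight n)) (invSucc_pos n)

noncomputable def A : ℓ²(ℕ, ℂ) →L[ℂ] ℓ²(ℕ, ℂ) := diagonal (invSucc * invSucc)

noncomputable def B : ℓ²(ℕ, ℂ) →L[ℂ] ℓ²(ℕ, ℂ) :=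
  diagonal ((parityWeight * parityWeight - 1) * (invSucc * invSucc))

lemma isPositive_A : A.IsPositive := by
  refine isPositive_diagonal fun n => ?_
  rw [lp.infty_coeFn_mul, Pi.mul_apply]
  exact mul_nonneg (invSucc_pos n).le (invSucc_pos n).le

lemma isPositive_B : B.IsPositive := by
  refine isPositive_diagonal fun n => ?_
  have hw : 0 ≤ parityWeight n * parityWeight n - 1 := by
    rw [parityWeight_apply]; split_ifs <;> norm_num
  simp only [lp.infty_coeFn_mul, lp.coeFn_sub, lp.infty_coeFn_one, Pi.mul_apply, Pi.sub_apply,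
    Pi.one_apply]
  exact mul_nonneg hw (mul_nonneg (invSucc_pos n).le (invSucc_pos n).le)

lemma isCompactOperator_A : IsCompactOperator A := by
  refine isCompactOperator_diagonal ?_
  rw [lp.infty_coeFn_mul, ← zero_mul 0]
  exact tendsto_invSucc.mul tendsto_invSucc

lemma isCompactOperator_B : IsCompactOperator B := by
  rw [B, diagonal_mul]
  exact isCompactOperator_A.clm_comp (diagonal (parityWeight * parityWeight - 1))

lemma A_add_B : A + B = diagonal (parityWeight * invSucc) * diagonal (parityWeight * invSucc) := by
  rw [A, B, ← diagonal_add, ← diagonal_mul]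
  congr 1
  ring

end SqrtEquationUnsolvable

/-- There exist a complex Hilbert space `E` and positive compact operators `A`, `B` on `E`
such that the equation `A^{1/2} = (A+B)^{1/2} ∘ (D + λ • I)` has no solution with `D`
compact and `λ ∈ ℂ`; i.e. `A^{1/2} = (A+B)^{1/2} X` is unsolvable in the unitization of the
compact operators. -/
theorem exists_sqrt_equation_unsolvable :
    ∃ (E : Type) (_ : NormedAddCommGroup E) (_ : InnerProductSpace ℂ E) (_ : CompleteSpace E),
      ∃ A B : E →L[ℂ] E,
        A.IsPositive ∧ B.IsPositive ∧ IsCompactOperator ⇑A ∧ IsCompactOperator ⇑B ∧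
        ∀ sA sAB : E →L[ℂ] E, sA.IsPositive → sA ∘L sA = A →
          sAB.IsPositive → sAB ∘L sAB = A + B →
          ∀ (D : E →L[ℂ] E) (lam : ℂ), IsCompactOperator ⇑D →
            sA ≠ sAB ∘L (D + lam • (1 : E →L[ℂ] E)) := by
  open SqrtEquationUnsolvable lp in
  refine ⟨ℓ²(ℕ, ℂ), inferInstance, inferInstance, inferInstance, A, B, isPositive_A, isPositive_B,
    isCompactOperator_A, isCompactOperator_B, fun sA sAB hsA hsA_sq hsAB hsAB_sq D lam hD h => ?_⟩
  have hsA_eq : sA = diagonal invSucc :=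
    hsA.eq_of_comp_self_eq (isPositive_diagonal fun n => (invSucc_pos n).le)
      (by rw [hsA_sq, A, diagonal_mul]; rfl)
  have hsAB_eq : sAB = diagonal (parityWeight * invSucc) :=
    hsAB.eq_of_comp_self_eq (isPositive_diagonal fun n => (parityWeight_mul_invSucc_pos n).le)
      (by rw [hsAB_sq, A_add_B]; rfl)
  subst hsA_eq hsAB_eq
  have hratio := tendsto_div_of_eq_comp_add_smul_one hD
    (isPositive_diagonal fun n => (parityWeight_mul_invSucc_pos n).le).isSymmetric
    orthonormal_single (fun n => diagonal_single _ n 1) (fun n => diagonal_single _ n 1)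
    (fun n => (parityWeight_mul_invSucc_pos n).ne') h
  refine not_tendsto_inv_parityWeight lam (hratio.congr fun n => ?_)
  rw [lp.infty_coeFn_mul, Pi.mul_apply, div_mul_cancel_right₀ (invSucc_pos n).ne']
end
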